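/- arXiv:1005.0598 — 7 statements merged into one kernel-verified Lean document; each statement's English description precedes it below -/
import Mathlib

section
/- (Transition of the y-parameters under one pentagram map, via Schwartz's x-coordinates.) (i) Define y_j = −(x_j·x_{j+1})^{−1} for j odd and y_j = −x_j·x_{j+1} for j even; define x′_j = x_{j−1}·(1−x_{j−3}x_{j−2})/(1−x_{j+1}x_{j+2}) for j even and x′_j = x_{j+1}·(1−x_{j+3}x_{j+2})/(1−x_{j−1}x_{j−2}) for j odd; and define y′_j = −(x′_j·x′_{j+1})^{−1} for j even and y′_j = −x′_j·x′_{j+1} for j odd. Then y′_j = y_{j−3}·y_j·y_{j+3}·(1+y_{j−1})(1+y_{j+1})/((1+y_{j−3})(1+y_{j+3})) for j even, and y′_j = y_j^{−1} for j odd. (ii) Symmetrically, define ŷ_j = −(x_j·x_{j+1})^{−1} for j even and ŷ_j = −x_j·x_{j+1} for j odd; define x″_j = x_{j+1}·(1−x_{j+3}x_{j+2})/(1−x_{j−1}x_{j−2}) for j even and x″_j = x_{j−1}·(1−x_{j−3}x_{j−2})/(1−x_{j+1}x_{j+2}) for j odd; and define ŷ″_j = −(x″_j·x″_{j+1})^{−1}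 for j odd and ŷ″_j = −x″_j·x″_{j+1} for j even. Then ŷ″_j = ŷ_j^{−1} for j even, and ŷ″_j = ŷ_{j−3}·ŷ_j·ŷ_{j+3}·(1+ŷ_{j−1})(1+ŷ_{j+1})/((1+ŷ_{j−3})(1+ŷ_{j+3})) for j odd. -/
open scoped Classical

noncomputable section

private theorem keyA {K : Type*} [Field K] (a b c d e f g h : K)
    (ha : a ≠ 0) (hb : b ≠ 0) (hc : c ≠ 0) (hd : d ≠ 0)
    (he : e ≠ 0) (hf : f ≠ 0) (hg : g ≠ 0) (hh : h ≠ 0)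
    (h1 : 1 - a*b ≠ 0) (h2 : 1 - c*d ≠ 0) (h4 : 1 - e*f ≠ 0) (h5 : 1 - g*h ≠ 0) :
    -((c*((1-a*b)/(1-e*f))) * (f*((1-h*g)/(1-d*c))))⁻¹
      = (-(a*b)⁻¹) * (-(d*e)) * (-(g*h)⁻¹) *
        ((1 + -(c*d)⁻¹) * (1 + -(e*f)⁻¹) / ((1 + -(a*b)⁻¹) * (1 + -(g*h)⁻¹))) := by
  have h2' : 1 - d*c ≠ 0 := by rwa [mul_comm]
  have h5' : 1 - h*g ≠ 0 := by rwa [mul_comm]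
  have e1 : a*b - 1 ≠ 0 := fun hco => h1 (by linear_combination -hco)
  have e5 : g*h - 1 ≠ 0 := fun hco => h5 (by linear_combination -hco)
  have r1 : 1 + -(a*b)⁻¹ = (a*b - 1)/(a*b) := by field_simp; ring
  have r2 : 1 + -(c*d)⁻¹ = (c*d - 1)/(c*d) := by field_simp; ring
  have r4 : 1 + -(e*f)⁻¹ = (e*f - 1)/(e*f) := by field_simp; ring
  have r5 : 1 + -(g*h)⁻¹ = (g*h - 1)/(g*h) := by field_simp; ring
  have lhs_eq : (c*((1-a*b)/(1-e*f))) * (f*((1-h*g)/(1-d*c)))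
      = (c*f*(1-a*b)*(1-h*g)) / ((1-e*f)*(1-d*c)) := by
    field_simp
  have rhs_eq : ((c*d - 1)/(c*d)) * ((e*f - 1)/(e*f)) / (((a*b - 1)/(a*b)) * ((g*h - 1)/(g*h)))
      = ((c*d - 1)*(e*f - 1)*(a*b)*(g*h)) / ((c*d)*(e*f)*((a*b - 1)*(g*h - 1))) := by
    rw [div_mul_div_comm, div_mul_div_comm, div_div_eq_mul_div, div_mul_eq_mul_div,
      div_div]
    ring
  have m_eq : -(a*b)⁻¹ * -(d*e) * -(g*h)⁻¹ = (-(d*e)) / ((a*b)*(g*h)) := by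
    rw [div_eq_mul_inv, mul_inv]; ring
  rw [r1, r2, r4, r5, lhs_eq, rhs_eq, inv_div, m_eq, div_mul_div_comm, ← neg_div]
  have hD1 : c*f*(1-a*b)*(1-h*g) ≠ 0 :=
    mul_ne_zero (mul_ne_zero (mul_ne_zero hc hf) h1) h5'
  have hD2 : (a*b)*(g*h) * ((c*d)*(e*f)*((a*b - 1)*(g*h - 1))) ≠ 0 :=
    mul_ne_zero (mul_ne_zero (mul_ne_zero ha hb) (mul_ne_zero hg hh))
      (mul_ne_zero (mul_ne_zero (mul_ne_zero hc hd) (mul_ne_zero he hf))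
        (mul_ne_zero e1 e5))
  rw [div_eq_div_iff hD1 hD2]
  ring

private theorem keyB {K : Type*} [Field K] (b c d e f g : K)
    (h2 : 1 - b*c ≠ 0) (h4 : 1 - f*g ≠ 0) :
    -((e*((1-g*f)/(1-c*b))) * (d*((1-b*c)/(1-f*g)))) = (-(d*e)⁻¹)⁻¹ := by
  have h2' : 1 - c*b ≠ 0 := by rwa [mul_comm]
  have h4' : 1 - g*f ≠ 0 := by rwa [mul_comm]
  rw [inv_neg, inv_inv]
  field_simp

/-- **Transition of the y-parameters under one pentagram map (Proposition 2.3),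
via Schwartz's x-coordinates.**  Here `x : ℤ → K` is a `2n`-periodic sequence of
cross-ratio coordinates with `x_j ≠ 0` and `1 − x_j x_{j+1} ≠ 0`.

(i) With `y_j = −(x_j x_{j+1})⁻¹` for `j` odd, `y_j = −x_j x_{j+1}` for `j` even,
`x'` the x-coordinates of the image polygon, and `y'` the corresponding
y-parameters, we get `y'_j = y_{j−3} y_j y_{j+3} (1+y_{j−1})(1+y_{j+1})/((1+y_{j−3})(1+y_{j+3}))`
for `j` even and `y'_j = y_j⁻¹` for `j` odd.

(ii) The symmetric statement with the parities interchanged. -/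
theorem stmt1 {K : Type*} [Field K] (n : ℕ) (hn : 2 ≤ n) (x : ℤ → K)
    (hper : ∀ j : ℤ, x (j + 2*n) = x j)
    (hx0 : ∀ j : ℤ, x j ≠ 0)
    (hx1 : ∀ j : ℤ, 1 - x j * x (j+1) ≠ 0)
    -- data of part (i)
    (y x' y' : ℤ → K)
    (hy : ∀ j : ℤ, (Odd j → y j = -(x j * x (j+1))⁻¹) ∧
                   (Even j → y j = -(x j * x (j+1))))
    (hx' : ∀ j : ℤ,
      (Even j → x' j = x (j-1) * ((1 - x (j-3) * x (j-2)) / (1 - x (j+1) * x (j+2)))) ∧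
      (Odd j → x' j = x (j+1) * ((1 - x (j+3) * x (j+2)) / (1 - x (j-1) * x (j-2)))))
    (hy' : ∀ j : ℤ, (Even j → y' j = -(x' j * x' (j+1))⁻¹) ∧
                    (Odd j → y' j = -(x' j * x' (j+1))))
    -- data of part (ii)
    (yh x'' yh'' : ℤ → K)
    (hyh : ∀ j : ℤ, (Even j → yh j = -(x j * x (j+1))⁻¹) ∧
                   (Odd j → yh j = -(x j * x (j+1))))
    (hx'' : ∀ j : ℤ,
      (Even j → x'' j = x (j+1) * ((1 - x (j+3) * x (j+2)) / (1 - x (j-1) * x (j-2)))) ∧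
      (Odd j → x'' j = x (j-1) * ((1 - x (j-3) * x (j-2)) / (1 - x (j+1) * x (j+2)))))
    (hyh'' : ∀ j : ℤ, (Odd j → yh'' j = -(x'' j * x'' (j+1))⁻¹) ∧
                     (Even j → yh'' j = -(x'' j * x'' (j+1)))) :
    -- part (i)
    ((∀ j : ℤ, Even j →
        y' j = y (j-3) * y j * y (j+3) *
          ((1 + y (j-1)) * (1 + y (j+1)) / ((1 + y (j-3)) * (1 + y (j+3))))) ∧
     (∀ j : ℤ, Odd j → y' j = (y j)⁻¹)) ∧
    -- part (ii)
    ((∀ j : ℤ, Even j → yh'' j = (yh j)⁻¹) ∧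
     (∀ j : ℤ, Odd j →
        yh'' j = yh (j-3) * yh j * yh (j+3) *
          ((1 + yh (j-1)) * (1 + yh (j+1)) / ((1 + yh (j-3)) * (1 + yh (j+3)))))) := by
  refine ⟨⟨fun j hj => ?_, fun j hj => ?_⟩, ⟨fun j hj => ?_, fun j hj => ?_⟩⟩
  · -- (i) even
    have hjE := Int.even_iff.mp hj
    have o1 : Odd (j+1) := Int.odd_iff.mpr (by omega)
    have o3 : Odd (j+3) := Int.odd_iff.mpr (by omega)
    have om1 : Odd (j-1) := Int.odd_iff.mpr (by omega)
    have om3 : Odd (j-3) := Int.odd_iff.mpr (by omega)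
    have hyj' := (hy' j).1 hj
    have hxj' := (hx' j).1 hj
    have hxj1' := (hx' (j+1)).2 o1
    rw [show (j+1)+1 = j+2 by ring, show (j+1)+3 = j+4 by ring,
        show (j+1)+2 = j+3 by ring, show (j+1)-1 = j by ring,
        show (j+1)-2 = j-1 by ring] at hxj1'
    have hym3 := (hy (j-3)).1 om3
    rw [show (j-3)+1 = j-2 by ring] at hym3
    have hyj := (hy j).2 hj
    have hyp3 := (hy (j+3)).1 o3
    rw [show (j+3)+1 = j+4 by ring] at hyp3
    have hym1 := (hy (j-1)).1 om1
    rw [show (j-1)+1 = j by ring] at hym1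
    have hyp1 := (hy (j+1)).1 o1
    rw [show (j+1)+1 = j+2 by ring] at hyp1
    have h1 := hx1 (j-3); rw [show (j-3)+1 = j-2 by ring] at h1
    have h2 := hx1 (j-1); rw [show (j-1)+1 = j by ring] at h2
    have h4 := hx1 (j+1); rw [show (j+1)+1 = j+2 by ring] at h4
    have h5 := hx1 (j+3); rw [show (j+3)+1 = j+4 by ring] at h5
    rw [hyj', hxj', hxj1', hym3, hyj, hyp3, hym1, hyp1]
    exact keyA _ _ _ _ _ _ _ _ (hx0 (j-3)) (hx0 (j-2)) (hx0 (j-1)) (hx0 j)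
      (hx0 (j+1)) (hx0 (j+2)) (hx0 (j+3)) (hx0 (j+4)) h1 h2 h4 h5
  · -- (i) odd
    have hjO := Int.odd_iff.mp hj
    have e1 : Even (j+1) := Int.even_iff.mpr (by omega)
    have hyj' := (hy' j).2 hj
    have hxj' := (hx' j).2 hj
    have hxj1' := (hx' (j+1)).1 e1
    rw [show (j+1)-1 = j by ring, show (j+1)-3 = j-2 by ring,
        show (j+1)-2 = j-1 by ring, show (j+1)+1 = j+2 by ring,
        show (j+1)+2 = j+3 by ring] at hxj1'
    have hyj := (hy j).1 hj
    have h2 := hx1 (j-2); rw [show (j-2)+1 = j-1 by ring] at h2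
    have h4 := hx1 (j+2); rw [show (j+2)+1 = j+3 by ring] at h4
    rw [hyj', hxj', hxj1', hyj]
    exact keyB _ _ _ _ _ _ h2 h4
  · -- (ii) even
    have hjE := Int.even_iff.mp hj
    have o1 : Odd (j+1) := Int.odd_iff.mpr (by omega)
    have hyj'' := (hyh'' j).2 hj
    have hxj'' := (hx'' j).1 hj
    have hxj1'' := (hx'' (j+1)).2 o1
    rw [show (j+1)-1 = j by ring, show (j+1)-3 = j-2 by ring,
        show (j+1)-2 = j-1 by ring, show (j+1)+1 = j+2 by ring,
        show (j+1)+2 = j+3 by ring] at hxj1''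
    have hyj := (hyh j).1 hj
    have h2 := hx1 (j-2); rw [show (j-2)+1 = j-1 by ring] at h2
    have h4 := hx1 (j+2); rw [show (j+2)+1 = j+3 by ring] at h4
    rw [hyj'', hxj'', hxj1'', hyj]
    exact keyB _ _ _ _ _ _ h2 h4
  · -- (ii) odd
    have hjO := Int.odd_iff.mp hj
    have e1 : Even (j+1) := Int.even_iff.mpr (by omega)
    have e3 : Even (j+3) := Int.even_iff.mpr (by omega)
    have em1 : Even (j-1) := Int.even_iff.mpr (by omega)
    have em3 : Even (j-3) := Int.even_iff.mpr (by omega)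
    have hyj'' := (hyh'' j).1 hj
    have hxj'' := (hx'' j).2 hj
    have hxj1'' := (hx'' (j+1)).1 e1
    rw [show (j+1)+1 = j+2 by ring, show (j+1)+3 = j+4 by ring,
        show (j+1)+2 = j+3 by ring, show (j+1)-1 = j by ring,
        show (j+1)-2 = j-1 by ring] at hxj1''
    have hym3 := (hyh (j-3)).1 em3
    rw [show (j-3)+1 = j-2 by ring] at hym3
    have hyj := (hyh j).2 hj
    have hyp3 := (hyh (j+3)).1 e3
    rw [show (j+3)+1 = j+4 by ring] at hyp3
    have hym1 := (hyh (j-1)).1 em1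
    rw [show (j-1)+1 = j by ring] at hym1
    have hyp1 := (hyh (j+1)).1 e1
    rw [show (j+1)+1 = j+2 by ring] at hyp1
    have h1 := hx1 (j-3); rw [show (j-3)+1 = j-2 by ring] at h1
    have h2 := hx1 (j-1); rw [show (j-1)+1 = j by ring] at h2
    have h4 := hx1 (j+1); rw [show (j+1)+1 = j+2 by ring] at h4
    have h5 := hx1 (j+3); rw [show (j+3)+1 = j+4 by ring] at h5
    rw [hyj'', hxj'', hxj1'', hym3, hyj, hyp3, hym1, hyp1]
    exact keyA _ _ _ _ _ _ _ _ (hx0 (j-3)) (hx0 (j-2)) (hx0 (j-1)) (hx0 j)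
      (hx0 (j+1)) (hx0 (j+2)) (hx0 (j+3)) (hx0 (j+4)) h1 h2 h4 h5
end
end

section
/- Suppose b_{ij} = 0 whenever i ≡ j (mod 2) (the quiver of B is bipartite), and suppose that for all i,j the quiver of B has as many length-2 paths from i to j as from j to i, i.e. ∑_{k} [b_{ik}]_+·[b_{kj}]_+ = ∑_{k} [b_{jk}]_+·[b_{ki}]_+ for all i,j. Then the mutations μ_i for i odd pairwise commute when applied to (y,B), as do the μ_i for i even. Moreover μ_{2n−1}∘⋯∘μ_3∘μ_1(y,B) = (y′, −B) where y′_j = y_j^{−1} for j odd and y′_j = y_j·∏_{k} y_k^{[b_{kj}]_+}·(1+y_k)^{−b_{kj}} for j even; and μ_{2n}∘⋯∘μ_4∘μ_2(y,B) = (y″, −B) where y″_j = y_j^{−1} for j even and y″_j = y_j·∏_{k} y_k^{[b_{kj}]_+}·(1+y_k)^{−b_{kj}} for j odd. -/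
/-!
Two mutations commute as soon as their vertices are not joined by an arrow, and in a bipartite
quiver two vertices of the same parity never are. Sweeping through one parity class, the arrows at
a vertex of the class are therefore still the original ones when it is mutated. So each `y_j`
outside the class just collects one factor `y_k^{[b_{kj}]_+} (1+y_k)^{-b_{kj}}` per mutation, and
every `b_{ij}` with `i` or `j` in the class is negated. Between two vertices `i, j` outside the
class, where `b_{ij} = 0`, the sweep creates the arrows
`∑_k sgn(b_{ik}) [b_{ik} b_{kj}]_+ = ∑_k [b_{ik}]_+ [b_{kj}]_+ - ∑_k [b_{jk}]_+ [b_{ki}]_+`,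
which vanish because there are as many paths of length two from `i` to `j` as back.
-/

open scoped Classical

noncomputable section

/-- The `Y`-seed mutation `μ_k` acting on a seed `(y, B)`, where the tuple
`y = (y₁,…,y_{2n})` and the `2n × 2n` matrix `B` are encoded as `2n`-periodic
functions on `ℤ` (the index `j` representing the vertex `j mod 2n`):
`y'_k = y_k⁻¹`, `y'_j = y_j · y_k^{[b_{kj}]_+} · (1+y_k)^{−b_{kj}}` for `j ≠ k`,
`b'_{ij} = −b_{ij}` if `i = k` or `j = k`, and
`b'_{ij} = b_{ij} + sgn(b_{ik})·[b_{ik} b_{kj}]_+` otherwise. -/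
def mutY {K : Type*} [Field K] (n : ℕ) (k : ℤ)
    (p : (ℤ → K) × (ℤ → ℤ → ℤ)) : (ℤ → K) × (ℤ → ℤ → ℤ) :=
  (fun j => if j ≡ k [ZMOD (2*n)] then (p.1 k)⁻¹
    else p.1 j * p.1 k ^ (max (p.2 k j) 0) * (1 + p.1 k) ^ (-(p.2 k j)),
   fun i j => if i ≡ k [ZMOD (2*n)] ∨ j ≡ k [ZMOD (2*n)] then -(p.2 i j)
    else p.2 i j + (p.2 i k).sign * max (p.2 i k * p.2 k j) 0)

theorem Function.Periodic.eq_of_intModEq {α : Type*} {f : ℤ → α} {c i j : ℤ}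
    (h : Function.Periodic f c) (hij : i ≡ j [ZMOD c]) : f i = f j := by
  obtain ⟨t, ht⟩ := Int.modEq_iff_dvd.mp hij
  simpa [show j = i + t * c by linarith] using (h.int_mul t i).symm

theorem Int.sign_mul_max_mul_eq (a b : ℤ) :
    a.sign * max (a * b) 0 = max a 0 * max b 0 - max (-a) 0 * max (-b) 0 := by
  rcases lt_trichotomy a 0 with ha | ha | ha <;> rcases lt_trichotomy b 0 with hb | hb | hb <;>
    simp [Int.sign_eq_neg_one_of_neg, Int.sign_eq_one_of_pos, ha, hb, ha.le, hb.le] <;> nlinarith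

theorem two_mul_add_modEq_two (t r : ℤ) : 2 * t + r ≡ r [ZMOD 2] :=
  Int.modEq_iff_dvd.mpr ⟨-t, by ring⟩

@[to_additive]
theorem Finset.prod_range_eq_prod_Icc_of_parity {M : Type*} [CommMonoid M] {r : ℤ} (hr1 : 1 ≤ r)
    (hr2 : r ≤ 2) (n : ℕ) {f : ℤ → M} (hf : ∀ k, ¬ k ≡ r [ZMOD 2] → f k = 1) :
    ∏ t ∈ range n, f (2 * t + r) = ∏ k ∈ Icc 1 (2 * (n : ℤ)), f k := by
  rw [← prod_image (f := f) (fun a _ b _ h => by simpa using h)]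
  refine prod_subset (fun k hk => ?_) (fun k hk hk' => hf k fun hkr => hk' ?_)
  · obtain ⟨t, ht, rfl⟩ := mem_image.1 hk
    rw [mem_range] at ht
    rw [mem_Icc]
    omega
  · rw [mem_Icc] at hk
    unfold Int.ModEq at hkr
    exact mem_image.2 ⟨((k - r) / 2).toNat, mem_range.2 (by omega), by omega⟩

section Mutated

variable (n : ℕ) (r : ℤ)

def IsMutated (m : ℕ) (j : ℤ) : Prop := ∃ t < m, j ≡ 2 * t + r [ZMOD 2 * n]

variable {n r}

theorem isMutated_succ {m : ℕ} {j : ℤ} :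
    IsMutated n r (m + 1) j ↔ IsMutated n r m j ∨ j ≡ 2 * m + r [ZMOD 2 * n] := by
  simp only [IsMutated, Nat.lt_succ_iff_lt_or_eq, or_and_right, exists_or, exists_eq_left]

theorem IsMutated.modEq_two {m : ℕ} {j : ℤ} (h : IsMutated n r m j) : j ≡ r [ZMOD 2] := by
  obtain ⟨t, -, ht⟩ := h
  exact (ht.of_mul_right n).trans (two_mul_add_modEq_two t r)

theorem not_isMutated_of_modEq {m : ℕ} {j : ℤ} (hm : m < n) (hj : j ≡ 2 * m + r [ZMOD 2 * n]) :
    ¬ IsMutated n r m j := by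
  rintro ⟨t, ht, h⟩
  have hdvd : 2 * (n : ℤ) ∣ 2 * t - 2 * m := by
    simpa using Int.ModEq.dvd (hj.symm.trans h)
  have := Int.eq_zero_of_abs_lt_dvd hdvd (by rw [abs_lt]; omega)
  omega

theorem isMutated_full_iff (hn : 0 < n) {j : ℤ} : IsMutated n r n j ↔ j ≡ r [ZMOD 2] := by
  refine ⟨IsMutated.modEq_two, fun h => ?_⟩
  obtain ⟨c, hc⟩ := Int.modEq_iff_dvd.mp h.symm
  have hmod := Int.emod_add_mul_ediv c n
  have hlt : c % n < n := Int.emod_lt_of_pos c (by omega)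
  refine ⟨(c % n).toNat, by omega, Int.modEq_iff_dvd.mpr ⟨-(c / n), ?_⟩⟩
  rw [Int.toNat_of_nonneg (Int.emod_nonneg c (by omega))]
  linear_combination -hc + 2 * hmod

end Mutated

def IsPeriodicSeed {K : Type*} (n : ℕ) (p : (ℤ → K) × (ℤ → ℤ → ℤ)) : Prop :=
  (∀ i i', i ≡ i' [ZMOD 2 * n] → p.1 i = p.1 i') ∧
    ∀ i i' j j', i ≡ i' [ZMOD 2 * n] → j ≡ j' [ZMOD 2 * n] → p.2 i j = p.2 i' j'

theorem isPeriodicSeed_of_periodic {K : Type*} {n : ℕ} {y : ℤ → K} {B : ℤ → ℤ → ℤ}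
    (hy : ∀ j, y (j + 2 * n) = y j)
    (hB : ∀ i j, B (i + 2 * n) j = B i j ∧ B i (j + 2 * n) = B i j) :
    IsPeriodicSeed n (y, B) := by
  refine ⟨fun i i' h => Function.Periodic.eq_of_intModEq hy h, fun i i' j j' hi hj => ?_⟩
  calc B i j = B i' j := Function.Periodic.eq_of_intModEq (f := (B · j)) (fun x => (hB x j).1) hi
    _ = B i' j' := Function.Periodic.eq_of_intModEq (fun x => (hB i' x).2) hj

def Unlinked {K : Type*} (n : ℕ) (p : (ℤ → K) × (ℤ → ℤ → ℤ)) (k l : ℤ) : Prop :=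
  ∀ j, j ≡ l [ZMOD 2 * n] → p.2 k j = 0 ∧ p.2 j k = 0

theorem IsPeriodicSeed.unlinked {K : Type*} {n : ℕ} {p : (ℤ → K) × (ℤ → ℤ → ℤ)} {k l : ℤ}
    (hp : IsPeriodicSeed n p) (hkl : p.2 k l = 0) (hlk : p.2 l k = 0) : Unlinked n p k l :=
  fun j hj => ⟨hkl ▸ hp.2 k k j l rfl hj, hlk ▸ hp.2 j l k k hj rfl⟩

section Commute

variable {K : Type*} [Field K] {n : ℕ} {p : (ℤ → K) × (ℤ → ℤ → ℤ)} {k l : ℤ}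

theorem mutY_fst_apply (j : ℤ) : (mutY n k p).1 j = if j ≡ k [ZMOD 2 * n] then (p.1 k)⁻¹
    else p.1 j * p.1 k ^ (max (p.2 k j) 0) * (1 + p.1 k) ^ (-(p.2 k j)) := rfl

theorem mutY_snd_apply (i j : ℤ) : (mutY n k p).2 i j =
    if i ≡ k [ZMOD 2 * n] ∨ j ≡ k [ZMOD 2 * n] then -(p.2 i j)
    else p.2 i j + (p.2 i k).sign * max (p.2 i k * p.2 k j) 0 := rfl

theorem Unlinked.mutY_fst (hkl : ¬ k ≡ l [ZMOD 2 * n]) (h : Unlinked n p k l) :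
    (mutY n l p).1 k = p.1 k := by
  simp [mutY, hkl, (h l rfl).2]

theorem Unlinked.mutY_snd_row (hkl : ¬ k ≡ l [ZMOD 2 * n]) (h : Unlinked n p k l) (j : ℤ) :
    (mutY n l p).2 k j = p.2 k j := by
  by_cases hj : j ≡ l [ZMOD 2 * n]
  · simp [mutY, hj, (h j hj).1]
  · simp [mutY, hkl, hj, (h l rfl).1]

theorem Unlinked.mutY_snd_col (hkl : ¬ k ≡ l [ZMOD 2 * n]) (h : Unlinked n p k l) (i : ℤ) :
    (mutY n l p).2 i k = p.2 i k := by
  by_cases hi : i ≡ l [ZMOD 2 * n]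
  · simp [mutY, hi, (h i hi).2]
  · simp [mutY, hkl, hi, (h l rfl).2]

theorem mutY_comm_of_unlinked (hkl : ¬ k ≡ l [ZMOD 2 * n]) (hk : Unlinked n p k l)
    (hl : Unlinked n p l k) : mutY n k (mutY n l p) = mutY n l (mutY n k p) := by
  have hlk : ¬ l ≡ k [ZMOD 2 * n] := fun h => hkl h.symm
  refine Prod.ext (funext fun j => ?_) (funext fun i => funext fun j => ?_)
  · rw [mutY_fst_apply (p := mutY n l p), hk.mutY_fst hkl, hk.mutY_snd_row hkl,
      mutY_fst_apply (p := mutY n k p), hl.mutY_fst hlk, hl.mutY_snd_row hlk,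
      mutY_fst_apply, mutY_fst_apply]
    split_ifs with hjk hjl hjl
    · exact absurd (hjk.symm.trans hjl) hkl
    · simp [(hl j hjk).1]
    · simp [(hk j hjl).1]
    · ring
  · rw [mutY_snd_apply (p := mutY n l p), hk.mutY_snd_row hkl, hk.mutY_snd_col hkl,
      mutY_snd_apply (p := mutY n k p), hl.mutY_snd_row hlk, hl.mutY_snd_col hlk,
      mutY_snd_apply, mutY_snd_apply]
    split_ifs with hik hil hil
    · rfl
    · rcases hik with hi | hj
      · simp [(hl i hi).2]
      · simp [(hl j hj).1]
    · rcases hil with hi | hj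
      · simp [(hk i hi).2]
      · simp [(hk j hj).1]
    · ring

namespace IsPeriodicSeed

theorem isPeriodicSeed_mutY (hp : IsPeriodicSeed n p) (k : ℤ) :
    IsPeriodicSeed n (mutY n k p) := by
  constructor
  · intro i i' h
    have hik : i ≡ k [ZMOD 2 * n] ↔ i' ≡ k [ZMOD 2 * n] := ⟨h.symm.trans, h.trans⟩
    simp only [mutY, hp.1 i i' h, hp.2 k k i i' rfl h, hik]
  · intro i i' j j' hi hj
    have hik : i ≡ k [ZMOD 2 * n] ↔ i' ≡ k [ZMOD 2 * n] := ⟨hi.symm.trans, hi.trans⟩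
    have hjk : j ≡ k [ZMOD 2 * n] ↔ j' ≡ k [ZMOD 2 * n] := ⟨hj.symm.trans, hj.trans⟩
    simp only [mutY, hp.2 i i' j j' hi hj, hp.2 i i' k k hi rfl, hp.2 k k j j' rfl hj, hik, hjk]

theorem mutY_congr (hp : IsPeriodicSeed n p) (h : k ≡ l [ZMOD 2 * n]) :
    mutY n k p = mutY n l p := by
  have hjk (j : ℤ) : j ≡ k [ZMOD 2 * n] ↔ j ≡ l [ZMOD 2 * n] := ⟨(·.trans h), (·.trans h.symm)⟩
  simp only [mutY, hp.1 k l h, hp.2 k l _ _ h rfl, hp.2 _ _ k l rfl h, hjk]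

theorem mutY_comm (hp : IsPeriodicSeed n p) (hkl : p.2 k l = 0) (hlk : p.2 l k = 0) :
    mutY n k (mutY n l p) = mutY n l (mutY n k p) := by
  by_cases h : k ≡ l [ZMOD 2 * n]
  · rw [(hp.isPeriodicSeed_mutY l).mutY_congr h, hp.mutY_congr h]
  · exact mutY_comm_of_unlinked h (hp.unlinked hkl hlk) (hp.unlinked hlk hkl)

end IsPeriodicSeed

end Commute

section Sweep

open Finset

variable {K : Type*} [Field K] {n : ℕ} {r : ℤ}

-- The ascription `(t : ℤ)` makes this a fold over `List.range m` cast to `List ℤ`, which is how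
-- the compound mutations of the main theorem elaborate.
def mutYSeq (n : ℕ) (r : ℤ) (m : ℕ) (p : (ℤ → K) × (ℤ → ℤ → ℤ)) : (ℤ → K) × (ℤ → ℤ → ℤ) :=
  (List.range m).foldl (fun q t => mutY n (2 * (t : ℤ) + r) q) p

def mutYSeqB (n : ℕ) (r : ℤ) (B : ℤ → ℤ → ℤ) (m : ℕ) (i j : ℤ) : ℤ :=
  (if IsMutated n r m i ∨ IsMutated n r m j then -B i j else B i j) +
    ∑ t ∈ range m, (B i (2 * t + r)).sign * max (B i (2 * t + r) * B (2 * t + r) j) 0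

def mutYSeqY (n : ℕ) (r : ℤ) (y : ℤ → K) (B : ℤ → ℤ → ℤ) (m : ℕ) (j : ℤ) : K :=
  if IsMutated n r m j then (y j)⁻¹
  else y j * ∏ t ∈ range m, y (2 * t + r) ^ max (B (2 * t + r) j) 0 *
    (1 + y (2 * t + r)) ^ (-B (2 * t + r) j)

theorem mutYSeq_succ (m : ℕ) (p : (ℤ → K) × (ℤ → ℤ → ℤ)) :
    mutYSeq n r (m + 1) p = mutY n (2 * m + r) (mutYSeq n r m p) := by
  simp [mutYSeq, List.range_succ]

variable {y : ℤ → K} {B : ℤ → ℤ → ℤ} (hbip : ∀ i j, i ≡ j [ZMOD 2] → B i j = 0)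
include hbip

theorem sum_sign_mul_max_eq_zero {i j : ℤ} (h : i ≡ r [ZMOD 2] ∨ j ≡ r [ZMOD 2]) (m : ℕ) :
    ∑ t ∈ range m, (B i (2 * t + r)).sign * max (B i (2 * t + r) * B (2 * t + r) j) 0 = 0 := by
  refine sum_eq_zero fun t _ => ?_
  rcases h with h | h
  · simp [hbip i _ (h.trans (two_mul_add_modEq_two t r).symm)]
  · simp [hbip _ j ((two_mul_add_modEq_two t r).trans h.symm)]

theorem mutYSeqB_row {m : ℕ} (hm : m < n) (j : ℤ) :
    mutYSeqB n r B m (2 * m + r) j = B (2 * m + r) j := by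
  have hk := two_mul_add_modEq_two m r
  rw [mutYSeqB, sum_sign_mul_max_eq_zero hbip (.inl hk), add_zero]
  simp only [not_isMutated_of_modEq hm rfl, false_or]
  split_ifs with hj
  · simp [hbip _ _ (hk.trans hj.modEq_two.symm)]
  · rfl

theorem mutYSeqB_col {m : ℕ} (hm : m < n) (i : ℤ) :
    mutYSeqB n r B m i (2 * m + r) = B i (2 * m + r) := by
  have hk := two_mul_add_modEq_two m r
  rw [mutYSeqB, sum_sign_mul_max_eq_zero hbip (.inr hk), add_zero]
  simp only [not_isMutated_of_modEq hm rfl, or_false]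
  split_ifs with hi
  · simp [hbip _ _ (hi.modEq_two.trans hk.symm)]
  · rfl

theorem mutYSeqY_self {m : ℕ} (hm : m < n) :
    mutYSeqY n r y B m (2 * m + r) = y (2 * m + r) := by
  rw [mutYSeqY, if_neg (not_isMutated_of_modEq hm rfl), prod_eq_one, mul_one]
  intro t _
  simp [hbip _ _ ((two_mul_add_modEq_two t r).trans (two_mul_add_modEq_two m r).symm)]

theorem mutY_snd_mutYSeqB {m : ℕ} (hm : m < n) (Y : ℤ → K) (i j : ℤ) :
    (mutY n (2 * m + r) (Y, mutYSeqB n r B m)).2 i j = mutYSeqB n r B (m + 1) i j := by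
  have hk := two_mul_add_modEq_two m r
  dsimp only [mutY_snd_apply]
  rw [mutYSeqB_col hbip hm, mutYSeqB_row hbip hm]
  by_cases hik : i ≡ 2 * m + r [ZMOD 2 * n] ∨ j ≡ 2 * m + r [ZMOD 2 * n]
  · have hpar : i ≡ r [ZMOD 2] ∨ j ≡ r [ZMOD 2] :=
      hik.imp (fun h => (h.of_mul_right n).trans hk) (fun h => (h.of_mul_right n).trans hk)
    have hmut : (IsMutated n r m i ∨ i ≡ 2 * m + r [ZMOD 2 * n]) ∨
        (IsMutated n r m j ∨ j ≡ 2 * m + r [ZMOD 2 * n]) := by tauto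
    simp only [mutYSeqB, if_pos hik, isMutated_succ, hmut, if_true,
      sum_sign_mul_max_eq_zero hbip hpar, add_zero]
    split_ifs with hmut'
    · have hij : i ≡ j [ZMOD 2] := by
        rcases hik with h | h <;> rcases hmut' with h' | h'
        · exact absurd h' (not_isMutated_of_modEq hm h)
        · exact ((h.of_mul_right n).trans hk).trans h'.modEq_two.symm
        · exact h'.modEq_two.trans ((h.of_mul_right n).trans hk).symm
        · exact absurd h' (not_isMutated_of_modEq hm h)
      simp [hbip i j hij]
    · rfl
  · rw [not_or] at hik
    simp only [mutYSeqB, hik, isMutated_succ, sum_range_succ, or_false, if_false]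
    ring

theorem mutY_fst_mutYSeqY (hy : ∀ j, y (j + 2 * n) = y j) {m : ℕ} (hm : m < n) (j : ℤ) :
    (mutY n (2 * m + r) (mutYSeqY n r y B m, mutYSeqB n r B m)).1 j =
      mutYSeqY n r y B (m + 1) j := by
  dsimp only [mutY_fst_apply]
  rw [mutYSeqY_self hbip hm, mutYSeqB_row hbip hm]
  by_cases hjk : j ≡ 2 * m + r [ZMOD 2 * n]
  · rw [if_pos hjk, mutYSeqY, if_pos (isMutated_succ.2 (.inr hjk)),
      Function.Periodic.eq_of_intModEq hy hjk]
  · simp only [hjk, if_false, mutYSeqY, isMutated_succ, or_false]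
    split_ifs with hmut
    · simp [hbip _ _ ((two_mul_add_modEq_two m r).trans hmut.modEq_two.symm)]
    · rw [prod_range_succ]
      ring

theorem mutYSeq_eq (hy : ∀ j, y (j + 2 * n) = y j) {m : ℕ} (hm : m ≤ n) :
    mutYSeq n r m (y, B) = (mutYSeqY n r y B m, mutYSeqB n r B m) := by
  induction m with
  | zero => ext <;> simp [mutYSeq, mutYSeqY, mutYSeqB, IsMutated]
  | succ m ih =>
    rw [mutYSeq_succ, ih (by omega)]
    ext
    exacts [mutY_fst_mutYSeqY hbip hy (by omega) _, mutY_snd_mutYSeqB hbip (by omega) _ _ _]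

theorem mutYSeqY_full (hn : 0 < n) (hr1 : 1 ≤ r) (hr2 : r ≤ 2) (j : ℤ) :
    mutYSeqY n r y B n j = if j ≡ r [ZMOD 2] then (y j)⁻¹
      else y j * ∏ k ∈ Icc 1 (2 * (n : ℤ)), y k ^ max (B k j) 0 * (1 + y k) ^ (-B k j) := by
  rw [mutYSeqY, isMutated_full_iff hn]
  split_ifs with hj
  · rfl
  · refine congrArg (y j * ·) (prod_range_eq_prod_Icc_of_parity hr1 hr2 n
      (f := fun k => y k ^ max (B k j) 0 * (1 + y k) ^ (-B k j)) fun k hk => ?_)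
    have hkj : k ≡ j [ZMOD 2] := by unfold Int.ModEq at *; omega
    simp [hbip k j hkj]

theorem mutYSeqB_full (hskew : ∀ i j, B j i = -B i j)
    (hpath : ∀ i j, ∑ k ∈ Icc 1 (2 * (n : ℤ)), max (B i k) 0 * max (B k j) 0 =
      ∑ k ∈ Icc 1 (2 * (n : ℤ)), max (B j k) 0 * max (B k i) 0)
    (hn : 0 < n) (hr1 : 1 ≤ r) (hr2 : r ≤ 2) (i j : ℤ) :
    mutYSeqB n r B n i j = -B i j := by
  rw [mutYSeqB, isMutated_full_iff hn, isMutated_full_iff hn]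
  by_cases hij : i ≡ r [ZMOD 2] ∨ j ≡ r [ZMOD 2]
  · rw [if_pos hij, sum_sign_mul_max_eq_zero hbip hij, add_zero]
  · rw [not_or] at hij
    have hvanish {a b : ℤ} (ha : ¬ a ≡ r [ZMOD 2]) (k : ℤ) (hk : ¬ k ≡ r [ZMOD 2]) :
        max (B a k) 0 * max (B k b) 0 = 0 := by
      rw [hbip a k (by unfold Int.ModEq at *; omega)]
      simp
    rw [if_neg (not_or.2 hij), hbip i j (by unfold Int.ModEq at *; omega), neg_zero, zero_add]
    have hterm (k : ℤ) : (B i k).sign * max (B i k * B k j) 0 =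
        max (B i k) 0 * max (B k j) 0 - max (B j k) 0 * max (B k i) 0 := by
      rw [Int.sign_mul_max_mul_eq, ← hskew, ← hskew, mul_comm (max (B k i) 0)]
    simp only [hterm, sum_sub_distrib]
    rw [sum_range_eq_sum_Icc_of_parity hr1 hr2 n (hvanish hij.1),
      sum_range_eq_sum_Icc_of_parity hr1 hr2 n (hvanish hij.2), hpath, sub_self]

theorem mutYSeq_full (hy : ∀ j, y (j + 2 * n) = y j) (hskew : ∀ i j, B j i = -B i j)
    (hpath : ∀ i j, ∑ k ∈ Icc 1 (2 * (n : ℤ)), max (B i k) 0 * max (B k j) 0 =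
      ∑ k ∈ Icc 1 (2 * (n : ℤ)), max (B j k) 0 * max (B k i) 0)
    (hn : 0 < n) (hr1 : 1 ≤ r) (hr2 : r ≤ 2) :
    mutYSeq n r n (y, B) =
      (fun j => if j ≡ r [ZMOD 2] then (y j)⁻¹
        else y j * ∏ k ∈ Icc 1 (2 * (n : ℤ)), y k ^ max (B k j) 0 * (1 + y k) ^ (-B k j),
       fun i j => -B i j) := by
  rw [mutYSeq_eq hbip hy le_rfl]
  ext
  exacts [mutYSeqY_full hbip hn hr1 hr2 _, mutYSeqB_full hbip hskew hpath hn hr1 hr2 _ _]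

end Sweep

theorem stmt3_general {K : Type*} [Field K] (n : ℕ) (hn : 1 ≤ n)
    (y : ℤ → K) (B : ℤ → ℤ → ℤ)
    (hyper : ∀ j : ℤ, y (j + 2*n) = y j)
    (hBper : ∀ i j : ℤ, B (i + 2*n) j = B i j ∧ B i (j + 2*n) = B i j)
    (hskew : ∀ i j : ℤ, B j i = - B i j)
    (hbip : ∀ i j : ℤ, i ≡ j [ZMOD 2] → B i j = 0)
    (hpath : ∀ i j : ℤ,
      ∑ k ∈ Finset.Icc (1:ℤ) (2*n), max (B i k) 0 * max (B k j) 0 =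
      ∑ k ∈ Finset.Icc (1:ℤ) (2*n), max (B j k) 0 * max (B k i) 0) :
    -- the odd mutations pairwise commute on (y,B)
    (∀ k l : ℤ, Odd k → Odd l →
      mutY n k (mutY n l (y, B)) = mutY n l (mutY n k (y, B))) ∧
    -- the even mutations pairwise commute on (y,B)
    (∀ k l : ℤ, Even k → Even l →
      mutY n k (mutY n l (y, B)) = mutY n l (mutY n k (y, B))) ∧
    -- μ_{2n−1} ∘ ⋯ ∘ μ_3 ∘ μ_1 (y,B) = (y', −B)
    ((List.range n).foldl (fun q m => mutY n (2*(m:ℤ)+1) q) (y, B) =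
      (fun j => if Odd j then (y j)⁻¹
        else y j * ∏ k ∈ Finset.Icc (1:ℤ) (2*n),
          y k ^ (max (B k j) 0) * (1 + y k) ^ (-(B k j)),
       fun i j => -(B i j))) ∧
    -- μ_{2n} ∘ ⋯ ∘ μ_4 ∘ μ_2 (y,B) = (y'', −B)
    ((List.range n).foldl (fun q m => mutY n (2*(m:ℤ)+2) q) (y, B) =
      (fun j => if Even j then (y j)⁻¹
        else y j * ∏ k ∈ Finset.Icc (1:ℤ) (2*n),
          y k ^ (max (B k j) 0) * (1 + y k) ^ (-(B k j)),
       fun i j => -(B i j))) := by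
  have hp := isPeriodicSeed_of_periodic hyper hBper
  have hcomm (k l : ℤ) (h : k ≡ l [ZMOD 2]) :
      mutY n k (mutY n l (y, B)) = mutY n l (mutY n k (y, B)) :=
    hp.mutY_comm (hbip k l h) (hbip l k h.symm)
  have hodd (j : ℤ) : j ≡ 1 [ZMOD 2] ↔ Odd j := Int.odd_iff.symm
  have heven (j : ℤ) : j ≡ 2 [ZMOD 2] ↔ Even j := Int.even_iff.symm
  refine ⟨fun k l hk hl => hcomm k l (((hodd k).2 hk).trans ((hodd l).2 hl).symm),
    fun k l hk hl => hcomm k l (((heven k).2 hk).trans ((heven l).2 hl).symm), ?_, ?_⟩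
  · have h := mutYSeq_full hbip hyper hskew hpath hn le_rfl one_le_two
    simp only [hodd] at h
    exact h
  · have h := mutYSeq_full hbip hyper hskew hpath hn one_le_two le_rfl
    simp only [heven] at h
    exact h

/-- **Lemma 3.2 (bipartite compound mutations).**
Let `(y,B)` be a rank-`2n` `Y`-seed with `B` skew-symmetric, `b_{ij} = 0`
whenever `i ≡ j (mod 2)` (the quiver is bipartite), and with as many length-2
paths from `i` to `j` as from `j` to `i`.  Then the mutations `μ_i` for `i` odd
pairwise commute when applied to `(y,B)`, as do the `μ_i` for `i` even;
moreover `μ_{2n−1}∘⋯∘μ_3∘μ_1(y,B) = (y', −B)` and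
`μ_{2n}∘⋯∘μ_4∘μ_2(y,B) = (y'', −B)` with `y'`, `y''` given by the displayed
formulas. -/
theorem stmt3 {K : Type*} [Field K] (n : ℕ) (hn : 1 ≤ n)
    (y : ℤ → K) (B : ℤ → ℤ → ℤ)
    (hyper : ∀ j : ℤ, y (j + 2*n) = y j)
    (hBper : ∀ i j : ℤ, B (i + 2*n) j = B i j ∧ B i (j + 2*n) = B i j)
    (hy0 : ∀ k : ℤ, y k ≠ 0) (hy1 : ∀ k : ℤ, 1 + y k ≠ 0)
    (hskew : ∀ i j : ℤ, B j i = - B i j)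
    (hbip : ∀ i j : ℤ, i ≡ j [ZMOD 2] → B i j = 0)
    (hpath : ∀ i j : ℤ,
      ∑ k ∈ Finset.Icc (1:ℤ) (2*n), max (B i k) 0 * max (B k j) 0 =
      ∑ k ∈ Finset.Icc (1:ℤ) (2*n), max (B j k) 0 * max (B k i) 0) :
    -- the odd mutations pairwise commute on (y,B)
    (∀ k l : ℤ, Odd k → Odd l →
      mutY n k (mutY n l (y, B)) = mutY n l (mutY n k (y, B))) ∧
    -- the even mutations pairwise commute on (y,B)
    (∀ k l : ℤ, Even k → Even l →
      mutY n k (mutY n l (y, B)) = mutY n l (mutY n k (y, B))) ∧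
    -- μ_{2n−1} ∘ ⋯ ∘ μ_3 ∘ μ_1 (y,B) = (y', −B)
    ((List.range n).foldl (fun q m => mutY n (2*(m:ℤ)+1) q) (y, B) =
      (fun j => if Odd j then (y j)⁻¹
        else y j * ∏ k ∈ Finset.Icc (1:ℤ) (2*n),
          y k ^ (max (B k j) 0) * (1 + y k) ^ (-(B k j)),
       fun i j => -(B i j))) ∧
    -- μ_{2n} ∘ ⋯ ∘ μ_4 ∘ μ_2 (y,B) = (y'', −B)
    ((List.range n).foldl (fun q m => mutY n (2*(m:ℤ)+2) q) (y, B) =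
      (fun j => if Even j then (y j)⁻¹
        else y j * ∏ k ∈ Finset.Icc (1:ℤ) (2*n),
          y k ^ (max (B k j) 0) * (1 + y k) ^ (-(B k j)),
       fun i j => -(B i j))) :=
  stmt3_general n hn y B hyper hBper hskew hbip hpath
end
end

section
/- The matrix B₀ is skew-symmetric, and μ_even(y, B₀) = (α₂(y), −B₀) and μ_odd(y, −B₀) = (α₁(y), B₀). (Thus the pentagram-map transition equations for the y-parameters are exactly the Y-pattern dynamics of the cluster algebra with exchange matrix B₀.) -/
open scoped Classical

noncomputable section

/-- The exchange matrix `B₀`:  `b⁰_{ij} = (−1)^j` if `i−j ≡ ±1 (mod 2n)`,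
`b⁰_{ij} = (−1)^{j+1}` if `i−j ≡ ±3 (mod 2n)`, and `b⁰_{ij} = 0` otherwise. -/
def B0 (n : ℕ) : ℤ → ℤ → ℤ := fun i j =>
  if i - j ≡ 1 [ZMOD (2*n)] ∨ i - j ≡ -1 [ZMOD (2*n)] then
    (if Even j then 1 else -1)
  else if i - j ≡ 3 [ZMOD (2*n)] ∨ i - j ≡ -3 [ZMOD (2*n)] then
    (if Even j then -1 else 1)
  else 0

/-- The pentagram transition map `α₁`:
`y'_j = y_{j−3} y_j y_{j+3} (1+y_{j−1})(1+y_{j+1})/((1+y_{j−3})(1+y_{j+3}))` for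
`j` even and `y'_j = y_j⁻¹` for `j` odd. -/
def alpha1 {K : Type*} [Field K] (y : ℤ → K) : ℤ → K := fun j =>
  if Even j then
    y (j-3) * y j * y (j+3) *
      ((1 + y (j-1)) * (1 + y (j+1)) / ((1 + y (j-3)) * (1 + y (j+3))))
  else (y j)⁻¹

/-- The pentagram transition map `α₂`: `y''_j = y_j⁻¹` for `j` even and
`y''_j = y_{j−3} y_j y_{j+3} (1+y_{j−1})(1+y_{j+1})/((1+y_{j−3})(1+y_{j+3}))`
for `j` odd. -/
def alpha2 {K : Type*} [Field K] (y : ℤ → K) : ℤ → K := fun j =>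
  if Even j then (y j)⁻¹
  else y (j-3) * y j * y (j+3) *
    ((1 + y (j-1)) * (1 + y (j+1)) / ((1 + y (j-3)) * (1 + y (j+3))))

open Finset Function

/-!
The mutation points `2a + ε` of `μ_even` (`ε = 2`) and `μ_odd` (`ε = 1`) all have the same
parity, and `B₀` has no arrows between vertices of equal parity, so these mutations do not
interact: after mutating at the first `m` of them the seed has a closed form (`mutatedY`,
`mutatedB`). The mutated `y_k` are inverted, every other `y_j` picks up the factor
`y_k^{[b_kj]_+} (1 + y_k)^{-b_kj}` of each mutated `k`, and `b_ij` changes sign when exactly one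
of `i, j` has been mutated, up to the quadratic corrections `sgn(b_ik) [b_ik b_kj]_+`.
Once all `n` points are mutated, an unmutated `j` has exactly the four mutated neighbours
`j ± 1, j ± 3` (as `n ≥ 4`), which yields `α₁` and `α₂`, while the corrections to `b_ij` cancel
in pairs under the involution `k ↦ i + j - k`.
-/

theorem Function.Periodic.eq_of_modEq {α : Type*} {f : ℤ → α} {N a b : ℤ}
    (hf : Periodic f N) (h : a ≡ b [ZMOD N]) : f a = f b := by
  obtain ⟨t, ht⟩ := Int.modEq_iff_dvd.mp h
  rw [show a = b - t • N by rw [smul_eq_mul]; linarith, hf.sub_zsmul_eq]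

@[to_additive]
theorem Function.Periodic.prod_range_comp_add {M : Type*} [CommMonoid M] {n : ℕ}
    {g : ℤ → M} (hg : Periodic g (2 * n)) :
    Periodic (fun c => ∏ a ∈ range n, g (2 * a + c)) 2 := by
  intro c
  cases n with
  | zero => simp
  | succ n =>
    simp only
    rw [prod_range_succ, prod_range_succ']
    congr 1
    · refine prod_congr rfl fun a _ => ?_
      push_cast; ring_nf
    · rw [show 2 * (n : ℤ) + (c + 2) = c + 2 * ↑(n + 1) by push_cast; ring, hg]
      simp

theorem Function.Periodic.sum_range_sub_two_mul_add {G : Type*} [AddCommMonoid G] {n : ℕ}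
    {g : ℤ → G} (hg : Periodic g (2 * n)) {c : ℤ} (hc : Even c) (ε : ℤ) :
    ∑ a ∈ range n, g (c - (2 * a + ε)) = ∑ a ∈ range n, g (2 * a + ε) := by
  obtain ⟨d, rfl⟩ := hc
  have hshift : ∑ a ∈ range n, g (2 * a + (ε + (d - ε - n + 1) * 2)) =
      ∑ a ∈ range n, g (2 * a + ε) := (Periodic.sum_range_comp_add hg).int_mul _ ε
  rw [← hshift, ← sum_range_reflect]
  refine sum_congr rfl fun a ha => ?_
  have : ((n - 1 - a : ℕ) : ℤ) = n - 1 - a := by rw [mem_range] at ha; omega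
  rw [this]; ring_nf

theorem Int.sign_mul_max_add_sign_mul_max (P Q : ℤ) :
    P.sign * max (P * -Q) 0 + Q.sign * max (Q * -P) 0 = 0 := by
  rw [show Q * -P = P * -Q by ring, ← add_mul]
  rcases le_or_gt 0 (P * Q) with h | h
  · rw [max_eq_right (by linarith), mul_zero]
  · rcases mul_neg_iff.mp h with ⟨hP, hQ⟩ | ⟨hP, hQ⟩
    · rw [Int.sign_eq_one_of_pos hP, Int.sign_eq_neg_one_of_neg hQ]; ring
    · rw [Int.sign_eq_neg_one_of_neg hP, Int.sign_eq_one_of_pos hQ]; ring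

namespace Pentagram

theorem not_modEq_of_sub_pos_of_lt {N a b : ℤ} (h0 : 0 < a - b) (hN : a - b < N) :
    ¬ a ≡ b [ZMOD N] := fun h => by
  have := Int.eq_zero_of_abs_lt_dvd h.dvd (by rw [abs_lt]; constructor <;> linarith)
  linarith

theorem even_sub_of_modEq {N a b : ℤ} (h : a ≡ b [ZMOD 2 * N]) : Even (a - b) := by
  have := (h.of_mul_right N).dvd
  rw [Int.even_iff]; omega

theorem even_sub_iff (i j ε : ℤ) : Even (i - j) ↔ (Even (i - ε) ↔ Even (j - ε)) := by
  rw [← Int.even_sub, sub_sub_sub_cancel_right]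

variable (n : ℕ)

def profile (u : ℤ) : ℤ :=
  if u ≡ 1 [ZMOD 2 * n] ∨ u ≡ -1 [ZMOD 2 * n] then 1
  else if u ≡ 3 [ZMOD 2 * n] ∨ u ≡ -3 [ZMOD 2 * n] then -1 else 0

variable {n}

theorem profile_congr {u v : ℤ} (h : u ≡ v [ZMOD 2 * n]) : profile n u = profile n v := by
  have e : ∀ r, u ≡ r [ZMOD 2 * n] ↔ v ≡ r [ZMOD 2 * n] := fun r => ⟨h.symm.trans, h.trans⟩
  simp only [profile, e]

theorem profile_neg (u : ℤ) : profile n (-u) = profile n u := by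
  have e : ∀ r, -u ≡ r [ZMOD 2 * n] ↔ u ≡ -r [ZMOD 2 * n] := fun r => by
    rw [← Int.neg_modEq_neg, neg_neg]
  simp only [profile, e, neg_neg, or_comm]

theorem profile_eq_zero_of_even {u : ℤ} (hu : Even u) : profile n u = 0 := by
  have hodd : ∀ r : ℤ, r % 2 = 1 → ¬ u ≡ r [ZMOD 2 * n] := fun r hr h => by
    have := even_sub_of_modEq h
    rw [Int.even_iff] at hu this; omega
  simp [profile, hodd]

theorem profile_eq_zero {u : ℤ} (h5 : 5 ≤ u) (h : u ≤ 2 * n - 5) : profile n u = 0 := by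
  have hlt : ∀ r : ℤ, -3 ≤ r → r ≤ 3 → ¬ u ≡ r [ZMOD 2 * n] := fun r h1 h2 =>
    not_modEq_of_sub_pos_of_lt (by linarith) (by linarith)
  rw [profile, if_neg, if_neg] <;> simp [hlt]

theorem profile_one : profile n 1 = 1 := by simp [profile, Int.ModEq.refl]

theorem profile_neg_one : profile n (-1) = 1 := by simp [profile, Int.ModEq.refl]

theorem profile_three (hn : 3 ≤ n) : profile n 3 = -1 := by
  rw [profile, if_neg, if_pos (Or.inl (Int.ModEq.refl _))]
  rintro (h | h) <;> revert h <;> apply not_modEq_of_sub_pos_of_lt <;> omega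

theorem profile_neg_three (hn : 3 ≤ n) : profile n (-3) = -1 := by
  rw [profile_neg, profile_three hn]

variable (n) in
def signedProfile (ε i j : ℤ) : ℤ :=
  if Even (j - ε) then profile n (i - j) else -profile n (i - j)

variable {ε : ℤ}

theorem signedProfile_two : signedProfile n 2 = B0 n := by
  funext i j
  unfold signedProfile profile B0
  split_ifs <;> simp_all

theorem signedProfile_one : signedProfile n 1 = fun i j => -B0 n i j := by
  funext i j
  unfold signedProfile profile B0
  split_ifs <;> simp_all [← Int.not_even_iff_odd]

theorem signedProfile_eq_zero_of_even {i j : ℤ} (h : Even (i - j)) :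
    signedProfile n ε i j = 0 := by
  simp [signedProfile, profile_eq_zero_of_even h]

theorem signedProfile_swap (i j : ℤ) : signedProfile n ε j i = -signedProfile n ε i j := by
  by_cases h : Even (i - j)
  · rw [signedProfile_eq_zero_of_even h,
      signedProfile_eq_zero_of_even (by rw [← neg_sub]; exact h.neg), neg_zero]
  · have hji : profile n (j - i) = profile n (i - j) := by rw [← neg_sub, profile_neg]
    have hpar : Even (i - ε) ↔ ¬ Even (j - ε) := by rw [even_sub_iff i j ε] at h; tauto
    simp only [signedProfile, hji, hpar]
    split_ifs <;> simp

section Mutation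

variable (n : ℕ) (ε : ℤ) {K : Type*} [Field K]

def IsMutated (m : ℕ) (t : ℤ) : Prop := ∃ a < m, t ≡ 2 * a + ε [ZMOD 2 * n]

def mutatedY (B : ℤ → ℤ → ℤ) (y : ℤ → K) (m : ℕ) (j : ℤ) : K :=
  if IsMutated n ε m j then (y j)⁻¹
  else y j * ∏ a ∈ range m,
    y (2 * a + ε) ^ max (B (2 * a + ε) j) 0 * (1 + y (2 * a + ε)) ^ (-B (2 * a + ε) j)

def mutatedB (B : ℤ → ℤ → ℤ) (m : ℕ) (i j : ℤ) : ℤ :=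
  (if IsMutated n ε m i ↔ IsMutated n ε m j then B i j else -B i j) +
    ∑ a ∈ range m, (B i (2 * a + ε)).sign * max (B i (2 * a + ε) * B (2 * a + ε) j) 0

variable {n ε} {m : ℕ}

theorem even_sub_of_modEq_two_mul_add {t a : ℤ} (h : t ≡ 2 * a + ε [ZMOD 2 * n]) :
    Even (t - ε) := by
  have := (even_sub_of_modEq h).add (even_two_mul a)
  rwa [show t - (2 * a + ε) + 2 * a = t - ε by ring] at this

theorem IsMutated.even_sub {t : ℤ} (h : IsMutated n ε m t) : Even (t - ε) :=
  let ⟨_, _, ha⟩ := h; even_sub_of_modEq_two_mul_add ha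

theorem not_isMutated_zero (t : ℤ) : ¬ IsMutated n ε 0 t := by
  rintro ⟨a, ha, -⟩; omega

theorem isMutated_succ {t : ℤ} :
    IsMutated n ε (m + 1) t ↔ IsMutated n ε m t ∨ t ≡ 2 * m + ε [ZMOD 2 * n] := by
  simp only [IsMutated, Nat.lt_succ_iff_lt_or_eq, or_and_right, exists_or, exists_eq_left]

theorem not_isMutated_of_modEq (hm : m < n) {t : ℤ} (h : t ≡ 2 * m + ε [ZMOD 2 * n]) :
    ¬ IsMutated n ε m t := by
  rintro ⟨a, ha, h'⟩
  exact not_modEq_of_sub_pos_of_lt (N := 2 * n) (a := 2 * m + ε) (b := 2 * a + ε)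
    (by omega) (by omega) (h.symm.trans h')

theorem isMutated_iff_even (hn : 0 < n) {t : ℤ} : IsMutated n ε n t ↔ Even (t - ε) := by
  refine ⟨IsMutated.even_sub, fun ⟨s, hs⟩ => ⟨(s % n).toNat, ?_, ?_⟩⟩
  · have := Int.emod_lt_of_pos s (show (0 : ℤ) < n by omega); omega
  rw [Int.toNat_of_nonneg (Int.emod_nonneg s (by omega))]
  exact (Int.modEq_iff_dvd.mpr ⟨-(s / n), by rw [Int.emod_def]; linarith⟩)

variable {B : ℤ → ℤ → ℤ} (hB : ∀ i j, Even (i - j) → B i j = 0)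
include hB

theorem mutatedB_eq_of_even {i j : ℤ} (h : Even (i - ε) ∨ Even (j - ε)) :
    mutatedB n ε B m i j = if IsMutated n ε m i ↔ IsMutated n ε m j then B i j else -B i j := by
  rw [mutatedB, add_eq_left]
  refine sum_eq_zero fun a _ => ?_
  rcases h with h | h
  · rw [hB i _ (by rw [Int.even_iff] at h ⊢; omega)]; simp
  · rw [hB _ j (by rw [Int.even_iff] at h ⊢; omega)]; simp

theorem mutatedB_row {k : ℤ} (hk : Even (k - ε)) (hkm : ¬ IsMutated n ε m k) (j : ℤ) :
    mutatedB n ε B m k j = B k j := by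
  rw [mutatedB_eq_of_even hB (Or.inl hk)]
  by_cases hj : IsMutated n ε m j
  · rw [if_neg (by tauto), hB k j ((even_sub_iff k j ε).mpr (iff_of_true hk hj.even_sub)),
      neg_zero]
  · rw [if_pos (iff_of_false hkm hj)]

theorem mutatedB_col {k : ℤ} (hk : Even (k - ε)) (hkm : ¬ IsMutated n ε m k) (i : ℤ) :
    mutatedB n ε B m i k = B i k := by
  rw [mutatedB_eq_of_even hB (Or.inr hk)]
  by_cases hi : IsMutated n ε m i
  · rw [if_neg (by tauto), hB i k ((even_sub_iff i k ε).mpr (iff_of_true hi.even_sub hk)),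
      neg_zero]
  · rw [if_pos (iff_of_false hi hkm)]

theorem mutatedY_of_not_isMutated (y : ℤ → K) {k : ℤ} (hk : Even (k - ε))
    (hkm : ¬ IsMutated n ε m k) : mutatedY n ε B y m k = y k := by
  rw [mutatedY, if_neg hkm, prod_eq_one, mul_one]
  intro a _
  rw [hB _ k (by rw [Int.even_iff] at hk ⊢; omega)]
  simp

theorem mutY_mutatedY {y : ℤ → K} (hy : Periodic y (2 * n)) (hm : m < n) :
    (mutY n (2 * m + ε) (mutatedY n ε B y m, mutatedB n ε B m)).1 = mutatedY n ε B y (m + 1) := by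
  have hk : Even (2 * m + ε - ε) := ⟨m, by ring⟩
  have hkm := not_isMutated_of_modEq hm (Int.ModEq.refl (2 * m + ε))
  funext j
  simp only [mutY]
  rw [mutatedY_of_not_isMutated hB y hk hkm, mutatedB_row hB hk hkm]
  split_ifs with hjk
  · rw [mutatedY, if_pos (isMutated_succ.2 (Or.inr hjk)), hy.eq_of_modEq hjk]
  · by_cases hj : IsMutated n ε m j
    · have := hj.even_sub
      rw [hB _ j (by rw [Int.even_iff] at this ⊢; omega), mutatedY, mutatedY, if_pos hj,
        if_pos (isMutated_succ.2 (Or.inl hj))]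
      simp
    · rw [mutatedY, mutatedY, if_neg hj, if_neg (by rw [isMutated_succ]; tauto),
        prod_range_succ]
      ring

theorem mutY_mutatedB (y : ℤ → K) (hm : m < n) :
    (mutY n (2 * m + ε) (mutatedY n ε B y m, mutatedB n ε B m)).2 = mutatedB n ε B (m + 1) := by
  have hk : Even (2 * m + ε - ε) := ⟨m, by ring⟩
  have hkm := not_isMutated_of_modEq hm (Int.ModEq.refl (2 * m + ε))
  funext i j
  simp only [mutY]
  split_ifs with hijk
  · rw [mutatedB_eq_of_even hB (hijk.imp even_sub_of_modEq_two_mul_add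
      even_sub_of_modEq_two_mul_add), mutatedB_eq_of_even hB (hijk.imp
      even_sub_of_modEq_two_mul_add even_sub_of_modEq_two_mul_add)]
    by_cases hij : B i j = 0
    · simp [hij]
    rcases hijk with h | h
    · have hj : ¬ j ≡ 2 * m + ε [ZMOD 2 * n] :=
        fun hj => hij (hB i j (even_sub_of_modEq (h.trans hj.symm)))
      simp only [isMutated_succ, h, hj, not_isMutated_of_modEq hm h, or_true, or_false,
        true_iff, false_iff]
      split_ifs <;> simp
    · have hi : ¬ i ≡ 2 * m + ε [ZMOD 2 * n] :=
        fun hi => hij (hB i j (even_sub_of_modEq (hi.trans h.symm)))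
      simp only [isMutated_succ, h, hi, not_isMutated_of_modEq hm h, or_true, or_false,
        iff_true, iff_false]
      split_ifs <;> simp
  · rw [not_or] at hijk
    rw [mutatedB_col hB hk hkm, mutatedB_row hB hk hkm, mutatedB, mutatedB, sum_range_succ,
      isMutated_succ, isMutated_succ, or_iff_left hijk.1, or_iff_left hijk.2, add_assoc]

theorem foldl_mutY_eq {y : ℤ → K} (hy : Periodic y (2 * n)) (hm : m ≤ n) :
    (List.range m).foldl (fun q (a : ℕ) => mutY n (2 * a + ε) q) (y, B) =
      (mutatedY n ε B y m, mutatedB n ε B m) := by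
  induction m with
  | zero =>
    refine Prod.ext (funext fun j => ?_) (funext₂ fun i j => ?_) <;>
      simp [mutatedY, mutatedB, not_isMutated_zero]
  | succ m ih =>
    rw [List.range_succ, List.foldl_append, ih (by omega), List.foldl_cons, List.foldl_nil]
    exact Prod.ext (mutY_mutatedY hB hy (by omega)) (mutY_mutatedB hB y (by omega))

theorem mutatedB_eq_neg (hn : 0 < n)
    (hS : ∀ i j, ¬ Even (i - ε) → ¬ Even (j - ε) →
      ∑ a ∈ range n, (B i (2 * a + ε)).sign * max (B i (2 * a + ε) * B (2 * a + ε) j) 0 = 0) :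
    mutatedB n ε B n = fun i j => -B i j := by
  funext i j
  by_cases h : Even (i - ε) ∨ Even (j - ε)
  · rw [mutatedB_eq_of_even hB h, isMutated_iff_even hn, isMutated_iff_even hn]
    split_ifs with hij
    · rw [hB i j ((even_sub_iff i j ε).mpr hij), neg_zero]
    · rfl
  · rw [not_or] at h
    rw [mutatedB, isMutated_iff_even hn, isMutated_iff_even hn, if_pos (iff_of_false h.1 h.2),
      hS i j h.1 h.2, hB i j ((even_sub_iff i j ε).mpr (iff_of_false h.1 h.2)), add_zero,
      neg_zero]

end Mutation

section SignedProfile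

variable {n : ℕ} {ε : ℤ}

theorem signedProfile_congr {i i' j j' : ℤ} (hi : i ≡ i' [ZMOD 2 * n])
    (hj : j ≡ j' [ZMOD 2 * n]) : signedProfile n ε i j = signedProfile n ε i' j' := by
  have hpar : Even (j - ε) ↔ Even (j' - ε) := by
    have := even_sub_of_modEq hj
    simp only [Int.even_sub] at this ⊢; tauto
  simp only [signedProfile, hpar, profile_congr (hi.sub hj)]

theorem sum_signedProfile_corrections_eq_zero {i j : ℤ} (hi : ¬ Even (i - ε))
    (hj : ¬ Even (j - ε)) :
    ∑ a ∈ range n, (signedProfile n ε i (2 * a + ε)).sign *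
      max (signedProfile n ε i (2 * a + ε) * signedProfile n ε (2 * a + ε) j) 0 = 0 := by
  set f : ℤ → ℤ := fun k => (signedProfile n ε i k).sign *
    max (signedProfile n ε i k * signedProfile n ε k j) 0
  have hf : Periodic f (2 * n) := fun k => by
    simp only [f,
      signedProfile_congr (Int.ModEq.refl i) (Int.add_modEq_right (n := 2 * n) (a := k)),
      signedProfile_congr (Int.add_modEq_right (n := 2 * n) (a := k)) (Int.ModEq.refl j)]
  have hanti : ∀ a : ℕ, f (i + j - (2 * a + ε)) = -f (2 * a + ε) := fun a => by
    have hk : Even (2 * a + ε - ε) := ⟨a, by ring⟩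
    have hk' : Even (i + j - (2 * a + ε) - ε) := by rw [Int.even_iff] at *; omega
    simp only [f, signedProfile, if_pos hk, if_pos hk', if_neg hj]
    rw [show i - (i + j - (2 * a + ε)) = 2 * a + ε - j by ring,
      show i + j - (2 * a + ε) - j = i - (2 * a + ε) by ring]
    linarith [Int.sign_mul_max_add_sign_mul_max (profile n (i - (2 * a + ε)))
      (profile n (2 * a + ε - j))]
  have hreflect := hf.sum_range_sub_two_mul_add (c := i + j) (by rw [Int.even_iff] at *; omega) ε
  rw [sum_congr rfl fun a _ => hanti a, sum_neg_distrib] at hreflect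
  show ∑ a ∈ range n, f (2 * a + ε) = 0
  linarith

theorem mutatedY_signedProfile {K : Type*} [Field K] (hn : 4 ≤ n) {y : ℤ → K}
    (hy : Periodic y (2 * n)) {j : ℤ} (hj : ¬ Even (j - ε)) :
    mutatedY n ε (signedProfile n ε) y n j = y j * (y (j - 3) * (1 + y (j - 3))⁻¹ *
      (1 + y (j - 1)) * (1 + y (j + 1)) * (y (j + 3) * (1 + y (j + 3))⁻¹)) := by
  rw [mutatedY, if_neg (by rwa [isMutated_iff_even (by omega)])]
  congr 1
  set g : ℤ → K := fun k => y k ^ max (signedProfile n ε k j) 0 *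
    (1 + y k) ^ (-signedProfile n ε k j)
  have hg : Periodic g (2 * n) := fun k => by
    simp only [g, hy k, signedProfile_congr (Int.add_modEq_right (n := 2 * n) (a := k))
      (Int.ModEq.refl j)]
  have hval : ∀ u, g (j + u) =
      y (j + u) ^ max (-profile n u) 0 * (1 + y (j + u)) ^ profile n u := fun u => by
    simp only [g, signedProfile, if_neg hj, add_sub_cancel_left, neg_neg]
  obtain ⟨r, hr⟩ : Even (j - 3 - ε) := by rw [Int.even_iff] at *; omega
  have hshift : ∏ a ∈ range n, g (2 * a + ε) = ∏ a ∈ range n, g (2 * a + (j - 3)) := by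
    rw [show j - 3 = ε + r * 2 by linarith]
    exact (hg.prod_range_comp_add.int_mul r ε).symm
  show ∏ a ∈ range n, g (2 * a + ε) = _
  obtain ⟨l, rfl⟩ : ∃ l, n = 4 + l := ⟨n - 4, by omega⟩
  rw [hshift, prod_range_add, prod_eq_one (s := range l), mul_one]
  · have hfour : ∏ x ∈ range 4, g (2 * x + (j - 3)) =
        g (j + -3) * g (j + -1) * g (j + 1) * g (j + 3) := by
      simp [prod_range_succ]; ring_nf
    rw [hfour, hval, hval, hval, hval, profile_neg_three (by omega), profile_neg_one, profile_one,
      profile_three (by omega)]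
    simp only [← sub_eq_add_neg]
    norm_num
  · intro x hx
    rw [mem_range] at hx
    rw [show 2 * ((4 + x : ℕ) : ℤ) + (j - 3) = j + (2 * x + 5) by push_cast; ring, hval,
      profile_eq_zero (by omega) (by omega)]
    simp

theorem mutatedY_signedProfile_two {K : Type*} [Field K] (hn : 4 ≤ n) {y : ℤ → K}
    (hy : Periodic y (2 * n)) : mutatedY n 2 (signedProfile n 2) y n = alpha2 y := by
  funext j
  by_cases hj : Even j
  · rw [mutatedY, if_pos ((isMutated_iff_even (by omega)).2 (by simpa [Int.even_sub] using hj)),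
      alpha2, if_pos hj]
  · rw [mutatedY_signedProfile hn hy (by simpa [Int.even_sub] using hj), alpha2, if_neg hj,
      div_eq_mul_inv, mul_inv]
    ring

theorem mutatedY_signedProfile_one {K : Type*} [Field K] (hn : 4 ≤ n) {y : ℤ → K}
    (hy : Periodic y (2 * n)) : mutatedY n 1 (signedProfile n 1) y n = alpha1 y := by
  funext j
  by_cases hj : Even j
  · rw [mutatedY_signedProfile hn hy (by simpa [Int.even_sub] using hj), alpha1, if_pos hj,
      div_eq_mul_inv, mul_inv]
    ring
  · rw [mutatedY, if_pos ((isMutated_iff_even (by omega)).2 (by simpa [Int.even_sub] using hj)),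
      alpha1, if_neg hj]

theorem mutatedB_signedProfile (hn : 0 < n) :
    mutatedB n ε (signedProfile n ε) n = fun i j => -signedProfile n ε i j :=
  mutatedB_eq_neg (fun _ _ => signedProfile_eq_zero_of_even) hn
    fun _ _ => sum_signedProfile_corrections_eq_zero

end SignedProfile

end Pentagram

open Pentagram

theorem stmt4_general {K : Type*} [Field K] (n : ℕ) (hn : 4 ≤ n)
    (y : ℤ → K)
    (hyper : ∀ j : ℤ, y (j + 2*n) = y j) :
    -- B₀ is skew-symmetric
    (∀ i j : ℤ, B0 n j i = -(B0 n i j)) ∧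
    -- μ_even (y, B₀) = (α₂(y), −B₀)
    ((List.range n).foldl (fun q m => mutY n (2*(m:ℤ)+2) q) (y, B0 n) =
      (alpha2 y, fun i j => -(B0 n i j))) ∧
    -- μ_odd (y, −B₀) = (α₁(y), B₀)
    ((List.range n).foldl (fun q m => mutY n (2*(m:ℤ)+1) q)
        (y, fun i j => -(B0 n i j)) =
      (alpha1 y, B0 n)) := by
  have hB (ε : ℤ) : ∀ i j, Even (i - j) → signedProfile n ε i j = 0 :=
    fun _ _ => signedProfile_eq_zero_of_even
  refine ⟨fun i j => ?_, ?_, ?_⟩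
  · rw [← signedProfile_two]
    exact signedProfile_swap i j
  -- the statement folds over `List.range n` coerced to a list of integers
  all_goals simp only [bind_pure_comp, List.map_eq_map, List.foldl_map]
  · rw [← signedProfile_two, foldl_mutY_eq (hB 2) hyper le_rfl,
      mutatedY_signedProfile_two hn hyper, mutatedB_signedProfile (by omega)]
  · rw [← signedProfile_one, foldl_mutY_eq (hB 1) hyper le_rfl,
      mutatedY_signedProfile_one hn hyper, mutatedB_signedProfile (by omega), signedProfile_one]
    simp

/-- **Proposition 3.4.**  `B₀` is skew-symmetric, and
`μ_even(y, B₀) = (α₂(y), −B₀)` and `μ_odd(y, −B₀) = (α₁(y), B₀)`, where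
`μ_even = μ_{2n}∘⋯∘μ_4∘μ_2` and `μ_odd = μ_{2n−1}∘⋯∘μ_3∘μ_1`. -/
theorem stmt4 {K : Type*} [Field K] (n : ℕ) (hn : 4 ≤ n)
    (y : ℤ → K)
    (hyper : ∀ j : ℤ, y (j + 2*n) = y j)
    (hy0 : ∀ k : ℤ, y k ≠ 0) (hy1 : ∀ k : ℤ, 1 + y k ≠ 0) :
    -- B₀ is skew-symmetric
    (∀ i j : ℤ, B0 n j i = -(B0 n i j)) ∧
    -- μ_even (y, B₀) = (α₂(y), −B₀)
    ((List.range n).foldl (fun q m => mutY n (2*(m:ℤ)+2) q) (y, B0 n) =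
      (alpha2 y, fun i j => -(B0 n i j))) ∧
    -- μ_odd (y, −B₀) = (α₁(y), B₀)
    ((List.range n).foldl (fun q m => mutY n (2*(m:ℤ)+1) q)
        (y, fun i j => -(B0 n i j)) =
      (alpha1 y, B0 n)) :=
  stmt4_general n hn y hyper
end
end

section
/- For all j ∈ ℤ and k ≥ 0 with j+k even, m_{j,k} = ∑_{i=−k}^{k} e_{j+3i}. Equivalently, the tropical evaluation M_{j,k} of the Y-pattern variable Y_{j,k} in Trop(y₁,…,y_{2n}) is the monomial M_{j,k} = ∏_{i=−k}^{k} y_{j+3i}. -/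
open scoped Classical

noncomputable section

/-- The standard basis vector `e_j ∈ ℤ^{ℤ/2nℤ}` at `j mod 2n` (recording the
exponent of the variable `y_j` in a Laurent monomial). -/
def evec (n : ℕ) (j : ℤ) : ZMod (2*n) → ℤ :=
  fun i => if i = (j : ZMod (2*n)) then 1 else 0

/-- Componentwise minimum `min(0, v)` of a vector `v` with the zero vector. -/
def vmin0 (n : ℕ) (v : ZMod (2*n) → ℤ) : ZMod (2*n) → ℤ :=
  fun i => min 0 (v i)

/-!
All exponent vectors in the recurrence with `k ≥ 0` turn out to be sums of basis vectors, hence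
nonnegative, so every `min(0, ·)` term vanishes and the recurrence becomes linear:
`m_{j,k} = m_{j-3,k-1} + m_{j+3,k-1} - m_{j,k-2}`. The arithmetic progressions
`∑_{|i| ≤ k} e_{j+3i}` satisfy it by inclusion–exclusion of the index intervals
`[-k-2, k] ∪ [-k, k+2]`. At `k = 1` the term `-m_{j,-1} = e_j` supplies the middle summand.
-/

lemma Finset.sum_Icc_add_sum_Icc_of_overlap {α : Type*} [AddCommMonoid α] (g : ℤ → α)
    {a b c d : ℤ} (hac : a ≤ c) (hcb : c ≤ b + 1) (hbd : b ≤ d) :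
    ∑ i ∈ Finset.Icc a b, g i + ∑ i ∈ Finset.Icc c d, g i
      = ∑ i ∈ Finset.Icc a d, g i + ∑ i ∈ Finset.Icc c b, g i := by
  rw [← Finset.sum_union_inter]
  congr 2 <;> ext i <;> simp only [Finset.mem_union, Finset.mem_inter, Finset.mem_Icc] <;> omega

lemma vmin0_eq_zero_of_nonneg {n : ℕ} {v : ZMod (2*n) → ℤ} (hv : 0 ≤ v) : vmin0 n v = 0 :=
  funext fun i => min_eq_left (hv i)

lemma evec_nonneg (n : ℕ) (j : ℤ) : 0 ≤ evec n j := fun i => by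
  unfold evec; split_ifs <;> norm_num

def evecProgression (n : ℕ) (j k : ℤ) : ZMod (2*n) → ℤ :=
  ∑ i ∈ Finset.Icc (-k) k, evec n (j + 3 * i)

namespace evecProgression

variable (n : ℕ) (j : ℤ)

lemma zero : evecProgression n j 0 = evec n j := by
  simp [evecProgression]

lemma one : evecProgression n j 1 = evec n (j - 3) + evec n j + evec n (j + 3) := by
  rw [evecProgression, show Finset.Icc (-1 : ℤ) 1 = {-1, 0, 1} by decide,
    Finset.sum_insert (by decide), Finset.sum_insert (by decide), Finset.sum_singleton]
  simp only [mul_neg, mul_one, mul_zero, add_zero, ← sub_eq_add_neg, add_assoc]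

lemma vmin0_eq_zero (k : ℤ) : vmin0 n (evecProgression n j k) = 0 :=
  vmin0_eq_zero_of_nonneg (Finset.sum_nonneg fun i _ => evec_nonneg n (j + 3 * i))

lemma shift (c k : ℤ) :
    evecProgression n (j + 3 * c) k = ∑ i ∈ Finset.Icc (c - k) (c + k), evec n (j + 3 * i) := by
  rw [sub_eq_neg_add, add_comm c k, ← Finset.map_add_right_Icc, Finset.sum_map, evecProgression]
  simp only [addRightEmbedding_apply, mul_add, add_assoc, add_comm (3 * c)]

-- The progressions shifted by `∓3` overlap exactly in the unshifted one of length `2k+1`.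
lemma recurrence {k : ℤ} (hk : 0 ≤ k) :
    evecProgression n (j - 3) (k + 1) + evecProgression n (j + 3) (k + 1)
      - evecProgression n j k = evecProgression n j (k + 2) := by
  have hl := shift n j (-1) (k + 1)
  have hr := shift n j 1 (k + 1)
  rw [show j + 3 * -1 = j - 3 by ring] at hl
  rw [show j + 3 * 1 = j + 3 by ring] at hr
  rw [hl, hr, Finset.sum_Icc_add_sum_Icc_of_overlap _ (by omega) (by omega) (by omega),
    evecProgression, evecProgression, show -1 - (k + 1) = -(k + 2) by ring,
    show 1 + (k + 1) = k + 2 by ring, show 1 - (k + 1) = -k by ring,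
    show -1 + (k + 1) = k by ring, add_sub_cancel_right]

end evecProgression

theorem stmt5_general (n : ℕ) (M : ℤ → ℤ → (ZMod (2*n) → ℤ))
    (h1 : ∀ j : ℤ, Odd j → M j (-1) = -(evec n j))
    (h2 : ∀ j : ℤ, Even j → M j 0 = evec n j)
    (h3 : ∀ j k : ℤ, 1 ≤ k → Even (j+k) →
      M j k = M (j-3) (k-1) + M (j+3) (k-1) - M j (k-2)
        + vmin0 n (M (j-1) (k-1)) + vmin0 n (M (j+1) (k-1))
        - vmin0 n (M (j-3) (k-1)) - vmin0 n (M (j+3) (k-1))) :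
    ∀ j k : ℤ, 0 ≤ k → Even (j+k) →
      M j k = ∑ i ∈ Finset.Icc (-k) k, evec n (j+3*i) := by
  intro j k hk hjk
  change M j k = evecProgression n j k
  lift k to ℕ using hk
  induction k using Nat.twoStepInduction generalizing j with
  | zero => simpa [evecProgression.zero] using h2 j (by simpa using hjk)
  | one =>
    rw [Nat.cast_one] at hjk ⊢
    have hj : j % 2 = 1 := by have := Int.even_iff.mp hjk; omega
    rw [h3 j 1 le_rfl hjk, sub_self, show (1 : ℤ) - 2 = -1 by norm_num, h1 j (Int.odd_iff.mpr hj)]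
    rw [h2 (j - 3) (Int.even_iff.mpr (by omega)), h2 (j + 3) (Int.even_iff.mpr (by omega)),
      h2 (j - 1) (Int.even_iff.mpr (by omega)), h2 (j + 1) (Int.even_iff.mpr (by omega))]
    simp only [vmin0_eq_zero_of_nonneg (evec_nonneg n _), evecProgression.one]
    abel
  | more k ih0 ih1 =>
    push_cast at hjk ⊢
    have hj : (j + (k + 2)) % 2 = 0 := Int.even_iff.mp hjk
    rw [h3 j (k + 2) (by omega) hjk, show (k : ℤ) + 2 - 1 = (k + 1 : ℕ) by push_cast; ring,
      add_sub_cancel_right]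
    rw [ih1 (j - 3) (Int.even_iff.mpr (by push_cast; omega)),
      ih1 (j + 3) (Int.even_iff.mpr (by push_cast; omega)),
      ih1 (j - 1) (Int.even_iff.mpr (by push_cast; omega)),
      ih1 (j + 1) (Int.even_iff.mpr (by push_cast; omega)),
      ih0 j (Int.even_iff.mpr (by omega))]
    simp only [evecProgression.vmin0_eq_zero, add_zero, sub_zero]
    push_cast
    exact evecProgression.recurrence n j k.cast_nonneg

/-- **Proposition 4.1 (the tropical monomials `M_{j,k}`).**
Let `m_{j,k} ∈ ℤ^{ℤ/2nℤ}` be the exponent vectors of the tropical evaluation of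
the `Y`-pattern variables, defined by `m_{j,−1} = −e_j` for `j` odd,
`m_{j,0} = e_j` for `j` even, and
`m_{j,k} = m_{j−3,k−1} + m_{j+3,k−1} − m_{j,k−2} + min(0,m_{j−1,k−1}) +
min(0,m_{j+1,k−1}) − min(0,m_{j−3,k−1}) − min(0,m_{j+3,k−1})` for `k ≥ 1` and
`j+k` even.  Then `m_{j,k} = ∑_{i=−k}^{k} e_{j+3i}` for all `k ≥ 0` with `j+k`
even; i.e. `M_{j,k} = ∏_{i=−k}^{k} y_{j+3i}`. -/
theorem stmt5 (n : ℕ) (hn : 2 ≤ n) (M : ℤ → ℤ → (ZMod (2*n) → ℤ))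
    (h1 : ∀ j : ℤ, Odd j → M j (-1) = -(evec n j))
    (h2 : ∀ j : ℤ, Even j → M j 0 = evec n j)
    (h3 : ∀ j k : ℤ, 1 ≤ k → Even (j+k) →
      M j k = M (j-3) (k-1) + M (j+3) (k-1) - M j (k-2)
        + vmin0 n (M (j-1) (k-1)) + vmin0 n (M (j+1) (k-1))
        - vmin0 n (M (j-3) (k-1)) - vmin0 n (M (j+3) (k-1))) :
    ∀ j k : ℤ, 0 ≤ k → Even (j+k) →
      M j k = ∑ i ∈ Finset.Icc (-k) k, evec n (j+3*i) :=
  stmt5_general n M h1 h2 h3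
end
end

section
/- For all j ∈ ℤ and k ≥ 0 with j+k even: Y_{j,k} = (∏_{i=−k}^{k} y_{j+3i}) · F_{j−1,k}·F_{j+1,k} / (F_{j−3,k}·F_{j+3,k}) in K. (This is the separation of the Y-pattern variables of the pentagram map into a tropical monomial and F-polynomials.) -/
/-!
Write `M_{j,k} = ∏_{i=-k}^{k} y_{j+3i}` for the tropical monomial and argue by induction on `k`.
Inserting the formula at level `k` into the `F`-recursion gives
`1 + Y_{i,k} = F_{i,k+1} F_{i,k-1} / (F_{i-3,k} F_{i+3,k})`, so every factor of the
`Y`-recursion for `Y_{j,k+1}` becomes a ratio of `F`'s; the level-`k` `F`'s cancel, and the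
monomials combine through `M_{j-3,k} M_{j+3,k} = M_{j,k+1} M_{j,k-1}`. The first step `k = 0`
is the same computation with `y_j⁻¹` in place of `M_{j,-1}`.

All divisions are legitimate because the `F`'s are subtraction-free rational expressions in the
`y`'s: writing one as `p / q` with polynomials `p`, `q`, both can be chosen positive at
`y = (1, …, 1)`, so it does not vanish.
-/

open scoped Classical

noncomputable section

/-- The field `K = ℚ(y₁,…,y_{2n})`, realized as the fraction field of the
polynomial ring in `2n` indeterminates indexed by `ZMod (2n)` (which builds in
the `2n`-periodicity of the indices). -/
abbrev KK (n : ℕ) : Type := FractionRing (MvPolynomial (ZMod (2*n)) ℚ)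

/-- The indeterminate `y_j` for `j ∈ ℤ`, with `y_{j+2n} = y_j`. -/
def yy (n : ℕ) (j : ℤ) : KK n :=
  algebraMap (MvPolynomial (ZMod (2*n)) ℚ) (KK n) (MvPolynomial.X (j : ZMod (2*n)))

open Finset

section PositiveFraction

variable {R K 𝕜 : Type*} [CommRing R] [Field K] [Algebra R K] [CommRing 𝕜] [PartialOrder 𝕜]

def IsPositiveFraction (φ : R →+* 𝕜) (x : K) : Prop :=
  ∃ p q : R, 0 < φ p ∧ 0 < φ q ∧ x = algebraMap R K p / algebraMap R K q

variable {φ : R →+* 𝕜}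

lemma algebraMap_ne_zero_of_pos [IsFractionRing R K] {p : R} (hp : 0 < φ p) :
    algebraMap R K p ≠ 0 := by
  rw [Ne, IsFractionRing.to_map_eq_zero_iff]
  rintro rfl
  simp at hp

lemma IsPositiveFraction.ne_zero [IsFractionRing R K] {x : K}
    (hx : IsPositiveFraction φ x) : x ≠ 0 := by
  obtain ⟨p, q, hp, hq, rfl⟩ := hx
  exact div_ne_zero (algebraMap_ne_zero_of_pos hp) (algebraMap_ne_zero_of_pos hq)

variable [IsStrictOrderedRing 𝕜]

lemma isPositiveFraction_algebraMap {p : R} (hp : 0 < φ p) :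
    IsPositiveFraction φ (algebraMap R K p) :=
  ⟨p, 1, hp, by simp, by simp⟩

lemma isPositiveFraction_one : IsPositiveFraction φ (1 : K) :=
  ⟨1, 1, by simp, by simp, by simp⟩

namespace IsPositiveFraction

variable {x x' : K}

lemma mul (hx : IsPositiveFraction φ x) (hx' : IsPositiveFraction φ x') :
    IsPositiveFraction φ (x * x') := by
  obtain ⟨p, q, hp, hq, rfl⟩ := hx
  obtain ⟨p', q', hp', hq', rfl⟩ := hx'
  refine ⟨p * p', q * q', by simpa using mul_pos hp hp', by simpa using mul_pos hq hq', ?_⟩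
  rw [map_mul, map_mul, div_mul_div_comm]

lemma add [IsFractionRing R K] (hx : IsPositiveFraction φ x) (hx' : IsPositiveFraction φ x') :
    IsPositiveFraction φ (x + x') := by
  obtain ⟨p, q, hp, hq, rfl⟩ := hx
  obtain ⟨p', q', hp', hq', rfl⟩ := hx'
  refine ⟨p * q' + q * p', q * q', ?_, by simpa using mul_pos hq hq', ?_⟩
  · simpa using add_pos (mul_pos hp hq') (mul_pos hq hp')
  · rw [div_add_div _ _ (algebraMap_ne_zero_of_pos hq) (algebraMap_ne_zero_of_pos hq')]
    simp

lemma div (hx : IsPositiveFraction φ x) (hx' : IsPositiveFraction φ x') :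
    IsPositiveFraction φ (x / x') := by
  obtain ⟨p, q, hp, hq, rfl⟩ := hx
  obtain ⟨p', q', hp', hq', rfl⟩ := hx'
  refine ⟨p * q', q * p', by simpa using mul_pos hp hq', by simpa using mul_pos hq hp', ?_⟩
  rw [map_mul, map_mul, div_div_div_eq]

lemma prod {ι : Type*} {s : Finset ι} {f : ι → K} (hf : ∀ i ∈ s, IsPositiveFraction φ (f i)) :
    IsPositiveFraction φ (∏ i ∈ s, f i) :=
  prod_induction f _ (fun _ _ => mul) isPositiveFraction_one hf

end IsPositiveFraction

end PositiveFraction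

lemma prod_Icc_sub_one_mul_prod_Icc_add_one {M : Type*} [CommMonoid M] (f : ℤ → M) {a b : ℤ}
    (hab : a < b) :
    (∏ i ∈ Icc (a - 1) (b - 1), f i) * ∏ i ∈ Icc (a + 1) (b + 1), f i =
      (∏ i ∈ Icc (a - 1) (b + 1), f i) * ∏ i ∈ Icc (a + 1) (b - 1), f i := by
  have peel : ∀ c, a ≤ c →
      ∏ i ∈ Icc (a - 1) c, f i = f (a - 1) * (f a * ∏ i ∈ Icc (a + 1) c, f i) := by
    intro c hc
    rw [← insert_Icc_add_one_left_eq_Icc (by omega), sub_add_cancel,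
      ← insert_Icc_add_one_left_eq_Icc hc, prod_insert (by simp), prod_insert (by simp)]
  rw [peel _ (by omega), peel _ (by omega)]
  ac_rfl

namespace PentagramYPattern

variable {K : Type*} [Field K]

def tropMonomial (y : ℤ → K) (j k : ℤ) : K := ∏ i ∈ Icc (-k) k, y (j + 3 * i)

lemma tropMonomial_zero (y : ℤ → K) (j : ℤ) : tropMonomial y j 0 = y j := by
  simp [tropMonomial]

lemma tropMonomial_add_three_mul (y : ℤ → K) (j c k : ℤ) :
    tropMonomial y (j + 3 * c) k = ∏ i ∈ Icc (-k + c) (k + c), y (j + 3 * i) := by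
  rw [tropMonomial, ← map_add_right_Icc, prod_map]
  exact prod_congr rfl fun i _ => by simp only [addRightEmbedding_apply]; ring_nf

lemma tropMonomial_sub_three_mul_add_three (y : ℤ → K) (j : ℤ) {k : ℤ} (hk : 0 < k) :
    tropMonomial y (j - 3) k * tropMonomial y (j + 3) k =
      tropMonomial y j (k + 1) * tropMonomial y j (k - 1) := by
  have := prod_Icc_sub_one_mul_prod_Icc_add_one (fun i => y (j + 3 * i)) (neg_lt_self hk)
  rw [show j - 3 = j + 3 * (-1) by ring, show j + 3 = j + 3 * 1 by ring,
    tropMonomial_add_three_mul, tropMonomial_add_three_mul]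
  simpa only [tropMonomial, ← sub_eq_add_neg, neg_add', neg_sub', sub_neg_eq_add] using this

lemma tropMonomial_one (y : ℤ → K) (j : ℤ) :
    tropMonomial y j 1 = y (j - 3) * y j * y (j + 3) := by
  rw [tropMonomial, show Icc (-1 : ℤ) 1 = {-1, 0, 1} by decide]
  simp [sub_eq_add_neg, mul_assoc]

lemma tropMonomial_sub_three_mul_add_three_zero (y : ℤ → K) (j : ℤ) (hy : y j ≠ 0) :
    tropMonomial y (j - 3) 0 * tropMonomial y (j + 3) 0 = tropMonomial y j 1 * (y j)⁻¹ := by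
  rw [tropMonomial_zero, tropMonomial_zero, tropMonomial_one]
  field_simp

lemma isPositiveFraction_F {R 𝕜 : Type*} [CommRing R] [Algebra R K] [IsFractionRing R K]
    [CommRing 𝕜] [PartialOrder 𝕜] [IsStrictOrderedRing 𝕜] {φ : R →+* 𝕜}
    {y : ℤ → K} {F : ℤ → ℤ → K} (hy : ∀ j, IsPositiveFraction φ (y j))
    (hF1 : ∀ j, F j (-1) = 1) (hF2 : ∀ j, F j 0 = 1)
    (hF3 : ∀ j k, 0 ≤ k → F j (k + 1) = (F (j - 3) k * F (j + 3) k +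
      tropMonomial y j k * F (j - 1) k * F (j + 1) k) / F j (k - 1)) :
    ∀ j k, -1 ≤ k → IsPositiveFraction φ (F j k) := by
  suffices h : ∀ k, 0 ≤ k → ∀ j,
      IsPositiveFraction φ (F j (k - 1)) ∧ IsPositiveFraction φ (F j k) by
    intro j k hk
    obtain rfl | hk := hk.eq_or_lt
    · simpa using (h 0 le_rfl j).1
    · exact (h k (by omega) j).2
  intro k hk
  induction k, hk using Int.leInduction with
  | base => simp [hF1, hF2, isPositiveFraction_one]
  | succ k hk ih =>
    refine fun j => ⟨by simpa using (ih j).2, ?_⟩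
    have hM : IsPositiveFraction φ (tropMonomial y j k) := IsPositiveFraction.prod fun i _ => hy _
    rw [hF3 j k hk]
    exact (((ih _).2.mul (ih _).2).add ((hM.mul (ih _).2).mul (ih _).2)).div (ih j).1

variable {y : ℤ → K} {Y F : ℤ → ℤ → K}

lemma one_add_Y_eq {i k : ℤ}
    (hY : Y i k = tropMonomial y i k * (F (i - 1) k * F (i + 1) k) / (F (i - 3) k * F (i + 3) k))
    (hF : F i (k + 1) = (F (i - 3) k * F (i + 3) k +
      tropMonomial y i k * F (i - 1) k * F (i + 1) k) / F i (k - 1))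
    (hl : F (i - 3) k ≠ 0) (hr : F (i + 3) k ≠ 0) (hpred : F i (k - 1) ≠ 0) :
    1 + Y i k = F i (k + 1) * F i (k - 1) / (F (i - 3) k * F (i + 3) k) := by
  rw [hY, hF]
  field_simp

lemma Y_succ_eq {j k : ℤ} (m : K) (hjk : Odd (j + k))
    (hF : ∀ i, F i (k + 1) = (F (i - 3) k * F (i + 3) k +
      tropMonomial y i k * F (i - 1) k * F (i + 1) k) / F i (k - 1))
    (hFpred : ∀ i, F i (k - 1) ≠ 0) (hFk : ∀ i, F i k ≠ 0)
    (hYk : ∀ i, Even (i + k) →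
      Y i k = tropMonomial y i k * (F (i - 1) k * F (i + 1) k) / (F (i - 3) k * F (i + 3) k))
    (hYpred : Y j (k - 1) =
      m * (F (j - 1) (k - 1) * F (j + 1) (k - 1)) / (F (j - 3) (k - 1) * F (j + 3) (k - 1)))
    (hm : tropMonomial y (j - 3) k * tropMonomial y (j + 3) k = tropMonomial y j (k + 1) * m)
    (hm0 : m ≠ 0)
    (hY : Y j (k + 1) = Y (j - 3) k * Y (j + 3) k / Y j (k - 1) *
      ((1 + Y (j - 1) k) * (1 + Y (j + 1) k) / ((1 + Y (j - 3) k) * (1 + Y (j + 3) k)))) :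
    Y j (k + 1) = tropMonomial y j (k + 1) * (F (j - 1) (k + 1) * F (j + 1) (k + 1)) /
      (F (j - 3) (k + 1) * F (j + 3) (k + 1)) := by
  have hev : ∀ i, (i - j) % 2 = 1 → Even (i + k) := fun i hi => by
    rw [Int.odd_iff] at hjk
    rw [Int.even_iff]
    omega
  have hone : ∀ i, Even (i + k) →
      1 + Y i k = F i (k + 1) * F i (k - 1) / (F (i - 3) k * F (i + 3) k) := fun i hi =>
    one_add_Y_eq (hYk i hi) (hF i) (hFk _) (hFk _) (hFpred i)
  rw [hone (j - 1) (hev _ (by omega)), hone (j + 1) (hev _ (by omega)),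
    hone (j - 3) (hev _ (by omega)), hone (j + 3) (hev _ (by omega)),
    hYk (j - 3) (hev _ (by omega)), hYk (j + 3) (hev _ (by omega)), hYpred] at hY
  rw [hY, eq_div_of_mul_eq hm0 hm.symm]
  -- write each level-`k` index in one form, so that `field_simp` can cancel the `F`'s
  simp only [show j - 3 - 1 = j - 1 - 3 by ring, show j - 3 + 1 = j + 1 - 3 by ring,
    show j - 3 + 3 = j + 3 - 3 by ring, show j + 3 - 1 = j - 1 + 3 by ring,
    show j + 3 + 1 = j + 1 + 3 by ring]
  field_simp [hFk, hFpred]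

theorem Y_eq_tropMonomial_mul_div
    (hy : ∀ j, y j ≠ 0) (hF : ∀ j k, -1 ≤ k → F j k ≠ 0)
    (hY1 : ∀ j, Odd j → Y j (-1) = (y j)⁻¹) (hY2 : ∀ j, Even j → Y j 0 = y j)
    (hY3 : ∀ j k, 1 ≤ k → Even (j + k) →
      Y j k = (Y (j - 3) (k - 1) * Y (j + 3) (k - 1) / Y j (k - 2)) *
        ((1 + Y (j - 1) (k - 1)) * (1 + Y (j + 1) (k - 1)) /
         ((1 + Y (j - 3) (k - 1)) * (1 + Y (j + 3) (k - 1)))))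
    (hF1 : ∀ j, F j (-1) = 1) (hF2 : ∀ j, F j 0 = 1)
    (hF3 : ∀ j k, 0 ≤ k → F j (k + 1) = (F (j - 3) k * F (j + 3) k +
      tropMonomial y j k * F (j - 1) k * F (j + 1) k) / F j (k - 1)) :
    ∀ j k, 0 ≤ k → Even (j + k) →
      Y j k = tropMonomial y j k * (F (j - 1) k * F (j + 1) k) / (F (j - 3) k * F (j + 3) k) := by
  set P : ℤ → Prop := fun k => ∀ j, Even (j + k) →
    Y j k = tropMonomial y j k * (F (j - 1) k * F (j + 1) k) / (F (j - 3) k * F (j + 3) k)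
  have step : ∀ k, 0 ≤ k → P k → ∀ j (m : K), Odd (j + k) → m ≠ 0 →
      tropMonomial y (j - 3) k * tropMonomial y (j + 3) k = tropMonomial y j (k + 1) * m →
      Y j (k - 1) = m * (F (j - 1) (k - 1) * F (j + 1) (k - 1)) /
        (F (j - 3) (k - 1) * F (j + 3) (k - 1)) →
      Y j (k + 1) = tropMonomial y j (k + 1) * (F (j - 1) (k + 1) * F (j + 1) (k + 1)) /
        (F (j - 3) (k + 1) * F (j + 3) (k + 1)) := by
    intro k hk hPk j m hjk hm0 hm hYpred
    have hY := hY3 j (k + 1) (by omega) (by rw [← add_assoc]; exact hjk.add_one)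
    rw [add_sub_cancel_right, show k + 1 - 2 = k - 1 by ring] at hY
    exact Y_succ_eq m hjk (hF3 · k hk) (hF · _ (by omega)) (hF · _ (by omega)) hPk hYpred hm hm0
      hY
  have hP0 : P 0 := fun j hj => by simp [hY2 j (by simpa using hj), tropMonomial_zero, hF2]
  suffices h : ∀ k, 0 ≤ k → P k ∧ P (k + 1) from fun j k hk => (h k hk).1 j
  intro k hk
  induction k, hk using Int.leInduction with
  | base =>
    refine ⟨hP0, fun j hj => ?_⟩
    have hodd : Odd j := by simpa [Int.even_add_one] using hj
    exact step 0 le_rfl hP0 j (y j)⁻¹ (by simpa using hodd) (inv_ne_zero (hy j))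
      (tropMonomial_sub_three_mul_add_three_zero y j (hy j)) (by simp [hY1 j hodd, hF1])
  | succ k hk ih =>
    refine ⟨ih.2, fun j hj => ?_⟩
    have hjk : Odd (j + (k + 1)) := by simpa [← add_assoc, Int.even_add_one] using hj
    refine step (k + 1) (by omega) ih.2 j (tropMonomial y j k) hjk
      (prod_ne_zero_iff.mpr fun i _ => hy _) ?_ ?_
    · simpa only [add_sub_cancel_right] using
        tropMonomial_sub_three_mul_add_three y j (k := k + 1) (by omega)
    · simpa only [add_sub_cancel_right] using
        ih.1 j (by simpa [← add_assoc, Int.even_add_one] using hj)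

end PentagramYPattern

theorem stmt6_general (n : ℕ)
    (Y : ℤ → ℤ → KK n) (F : ℤ → ℤ → KK n)
    (hY1 : ∀ j : ℤ, Odd j → Y j (-1) = (yy n j)⁻¹)
    (hY2 : ∀ j : ℤ, Even j → Y j 0 = yy n j)
    (hY3 : ∀ j k : ℤ, 1 ≤ k → Even (j+k) →
      Y j k = (Y (j-3) (k-1) * Y (j+3) (k-1) / Y j (k-2)) *
        ((1 + Y (j-1) (k-1)) * (1 + Y (j+1) (k-1)) /
         ((1 + Y (j-3) (k-1)) * (1 + Y (j+3) (k-1)))))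
    (hF1 : ∀ j : ℤ, F j (-1) = 1)
    (hF2 : ∀ j : ℤ, F j 0 = 1)
    (hF3 : ∀ j k : ℤ, 0 ≤ k →
      F j (k+1) = (F (j-3) k * F (j+3) k +
        (∏ i ∈ Finset.Icc (-k) k, yy n (j+3*i)) * F (j-1) k * F (j+1) k) /
        F j (k-1)) :
    ∀ j k : ℤ, 0 ≤ k → Even (j+k) →
      Y j k = (∏ i ∈ Finset.Icc (-k) k, yy n (j+3*i)) *
        (F (j-1) k * F (j+1) k) / (F (j-3) k * F (j+3) k) := by
  have hy : ∀ j, IsPositiveFraction (MvPolynomial.eval fun _ => (1 : ℚ)) (yy n j) :=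
    fun j => isPositiveFraction_algebraMap (by simp)
  exact PentagramYPattern.Y_eq_tropMonomial_mul_div (fun j => (hy j).ne_zero)
    (fun j k hk => (PentagramYPattern.isPositiveFraction_F hy hF1 hF2 hF3 j k hk).ne_zero)
    hY1 hY2 hY3 hF1 hF2 hF3

/-- **Separation of the Y-pattern variables of the pentagram map into a tropical
monomial and F-polynomials (equations (9)-(10) of the paper).**
With `Y_{j,k}` defined by the `Y`-pattern recursion and `F_{j,k}` by the
`F`-polynomial recursion, for all `k ≥ 0` with `j+k` even:
`Y_{j,k} = (∏_{i=−k}^{k} y_{j+3i}) · F_{j−1,k} F_{j+1,k} / (F_{j−3,k} F_{j+3,k})`. -/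
theorem stmt6 (n : ℕ) (hn : 2 ≤ n)
    (Y : ℤ → ℤ → KK n) (F : ℤ → ℤ → KK n)
    (hY1 : ∀ j : ℤ, Odd j → Y j (-1) = (yy n j)⁻¹)
    (hY2 : ∀ j : ℤ, Even j → Y j 0 = yy n j)
    (hY3 : ∀ j k : ℤ, 1 ≤ k → Even (j+k) →
      Y j k = (Y (j-3) (k-1) * Y (j+3) (k-1) / Y j (k-2)) *
        ((1 + Y (j-1) (k-1)) * (1 + Y (j+1) (k-1)) /
         ((1 + Y (j-3) (k-1)) * (1 + Y (j+3) (k-1)))))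
    (hY4 : ∀ j k : ℤ, 0 ≤ k → Odd (j+k) → Y j k = (Y j (k-1))⁻¹)
    (hF1 : ∀ j : ℤ, F j (-1) = 1)
    (hF2 : ∀ j : ℤ, F j 0 = 1)
    (hF3 : ∀ j k : ℤ, 0 ≤ k →
      F j (k+1) = (F (j-3) k * F (j+3) k +
        (∏ i ∈ Finset.Icc (-k) k, yy n (j+3*i)) * F (j-1) k * F (j+1) k) /
        F j (k-1)) :
    ∀ j k : ℤ, 0 ≤ k → Even (j+k) →
      Y j k = (∏ i ∈ Finset.Icc (-k) k, yy n (j+3*i)) *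
        (F (j-1) k * F (j+1) k) / (F (j-3) k * F (j+3) k) :=
  stmt6_general n Y F hY1 hY2 hY3 hF1 hF2 hF3
end
end

section
/- Set f_{i,j,k} = m_{i,j,k}·F_{3i+j,k} ∈ K for all i,j ∈ ℤ and k ≥ −1. Then (f_{i,j,k}) satisfies the octahedron recurrence: f_{i,j,k−1}·f_{i,j,k+1} = f_{i−1,j,k}·f_{i+1,j,k} + f_{i,j−1,k}·f_{i,j+1,k} for all i,j ∈ ℤ and k ≥ 0. -/
open scoped Classical

noncomputable section

/-!
Put `c_{j,k} = ∏_{|s| ≤ k} y_{j+3s}`. Clearing the denominator in the recurrence of `F` gives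
`F_{j,k-1} F_{j,k+1} = F_{j-3,k} F_{j+3,k} + c_{j,k} F_{j-1,k} F_{j+1,k}`, so `f = m · F` satisfies
the octahedron recurrence as soon as the monomials absorb the coefficient:
`m_{i,j,k-1} m_{i,j,k+1} = m_{i-1,j,k} m_{i+1,j,k}` and
`m_{i,j-1,k} m_{i,j+1,k} = c_{3i+j,k} m_{i-1,j,k} m_{i+1,j,k}`.
The first is the recurrence of `m`. It is a multiplicative discrete wave equation, so
`m_{i,j,k} = ∏_{|s| ≤ k} m_{i+s,j,0}`; this reduces the second identity to `k = 0`, where it is an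
identity between explicit monomials, proved by peeling a row off the staircase of exponents.
No denominator vanishes: the recurrence of `F` is subtraction-free, so every `F_{j,k}` is a
quotient of polynomials that are positive at `y = 1`.
-/

open Finset

namespace Octahedron

section SymmetricInterval

variable {M : Type*} [CommMonoid M]

theorem prod_Icc_neg_add_one (f : ℤ → M) {t : ℤ} (ht : 0 ≤ t) :
    ∏ s ∈ Icc (-(t + 1)) (t + 1), f s = f (-(t + 1)) * f (t + 1) * ∏ s ∈ Icc (-t) t, f s := by
  rw [show Icc (-(t + 1)) (t + 1) = insert (-(t + 1)) (insert (t + 1) (Icc (-t) t)) by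
      ext; simp only [mem_Icc, mem_insert]; omega,
    prod_insert (by simp only [mem_insert, mem_Icc]; omega),
    prod_insert (by simp only [mem_Icc]; omega), mul_assoc]

theorem prod_Icc_sub_one_mul_prod_Icc_add_one (f : ℤ → M) (c : ℤ) {t : ℤ} (ht : 1 ≤ t) :
    (∏ s ∈ Icc (-t) t, f (c - 1 + s)) * ∏ s ∈ Icc (-t) t, f (c + 1 + s) =
      (∏ s ∈ Icc (-(t + 1)) (t + 1), f (c + s)) * ∏ s ∈ Icc (-(t - 1)) (t - 1), f (c + s) := by
  induction t, ht using Int.leInduction with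
  | base =>
    have h (g : ℤ → M) : ∏ s ∈ Icc (-1) 1, g s = g (-1) * g 1 * g 0 := by
      simpa using prod_Icc_neg_add_one g le_rfl
    rw [prod_Icc_neg_add_one (fun s => f (c + s)) zero_le_one, sub_self, neg_zero, Icc_self,
      prod_singleton, h, h, h]
    ring_nf
    ac_rfl
  | succ t ht ih =>
    have hpeel := prod_Icc_neg_add_one (fun s => f (c + s)) (by omega : 0 ≤ t - 1)
    rw [sub_add_cancel] at hpeel
    rw [prod_Icc_neg_add_one (fun s => f (c - 1 + s)) (by omega),
      prod_Icc_neg_add_one (fun s => f (c + 1 + s)) (by omega),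
      prod_Icc_neg_add_one (fun s => f (c + s)) (by omega : 0 ≤ t + 1), add_sub_cancel_right, hpeel,
      mul_mul_mul_comm, ih]
    ring_nf
    ac_rfl

end SymmetricInterval

section Wave

variable {K : Type*} [Field K]

/-- `log u` solves the discrete wave equation `v_{i,k+1} + v_{i,k-1} = v_{i-1,k} + v_{i+1,k}` with
`v_{i,-1} = -v_{i,0}`; `IsMulWave.eq_prod` is d'Alembert's formula. -/
structure IsMulWave (u : ℤ → ℤ → K) : Prop where
  neg_one : ∀ i, u i (-1) = (u i 0)⁻¹
  zero_ne_zero : ∀ i, u i 0 ≠ 0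
  step : ∀ i k, 1 ≤ k → u i k = u (i - 1) (k - 1) * u (i + 1) (k - 1) / u i (k - 2)

namespace IsMulWave

variable {u : ℤ → ℤ → K}

theorem eq_prod (hu : IsMulWave u) {k : ℤ} (hk : 0 ≤ k) (i : ℤ) :
    u i k = ∏ s ∈ Icc (-k) k, u (i + s) 0 := by
  suffices h : ∀ k, 0 ≤ k → ∀ i, u i k = ∏ s ∈ Icc (-k) k, u (i + s) 0 ∧
      u i (k + 1) = ∏ s ∈ Icc (-(k + 1)) (k + 1), u (i + s) 0 from (h k hk i).1
  intro k hk
  induction k, hk using Int.leInduction with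
  | base =>
    intro i
    refine ⟨by simp, ?_⟩
    rw [prod_Icc_neg_add_one _ le_rfl, zero_add, hu.step i 1 le_rfl]
    simp only [sub_self, Int.reduceSub, hu.neg_one, div_inv_eq_mul, neg_zero, Icc_self,
      prod_singleton, add_zero]
    ring_nf
  | succ k hk ih =>
    intro i
    refine ⟨(ih i).2, ?_⟩
    have hne : ∏ s ∈ Icc (-k) k, u (i + s) 0 ≠ 0 :=
      prod_ne_zero_iff.2 fun _ _ => hu.zero_ne_zero _
    have hw := prod_Icc_sub_one_mul_prod_Icc_add_one (fun x => u x 0) i (show 1 ≤ k + 1 by omega)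
    simp only [add_sub_cancel_right] at hw
    rw [hu.step i (k + 1 + 1) (by omega), show k + 1 + 1 - 1 = k + 1 by ring,
      show k + 1 + 1 - 2 = k by ring, (ih _).2, (ih _).2, (ih _).1, hw, mul_div_cancel_right₀ _ hne]

theorem ne_zero (hu : IsMulWave u) {k : ℤ} (hk : -1 ≤ k) (i : ℤ) : u i k ≠ 0 := by
  rcases hk.eq_or_lt with rfl | hk
  · exact hu.neg_one i ▸ inv_ne_zero (hu.zero_ne_zero i)
  · rw [hu.eq_prod (by omega : 0 ≤ k) i]
    exact prod_ne_zero_iff.2 fun _ _ => hu.zero_ne_zero _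

theorem mul_eq (hu : IsMulWave u) {k : ℤ} (hk : 0 ≤ k) (i : ℤ) :
    u i (k - 1) * u i (k + 1) = u (i - 1) k * u (i + 1) k := by
  rw [hu.step i (k + 1) (by omega), add_sub_cancel_right, show k + 1 - 2 = k - 1 by ring,
    mul_div_cancel₀ _ (hu.ne_zero (by omega) i)]

end IsMulWave

theorem mul_eq_prod_mul_of_level_zero (y : ℤ → K) (u : ℤ → ℤ → ℤ → K)
    (hu : ∀ j, IsMulWave fun i k => u i j k)
    (h₀ : ∀ i j, u i (j - 1) 0 * u i (j + 1) 0 = y (3 * i + j) * (u (i - 1) j 0 * u (i + 1) j 0))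
    {k : ℤ} (hk : 0 ≤ k) (i j : ℤ) :
    u i (j - 1) k * u i (j + 1) k =
      (∏ s ∈ Icc (-k) k, y (3 * i + j + 3 * s)) * (u (i - 1) j k * u (i + 1) j k) := by
  simp only [(hu _).eq_prod hk, ← prod_mul_distrib]
  refine prod_congr rfl fun s _ => ?_
  rw [h₀]
  ring_nf

end Wave

section Monomial

variable {M : Type*} [CommMonoid M]

/-- For `a = 3i` this is `m_{i,j,0}` with `j ≥ 0`, reindexed over `ℕ`; `monomial` extends it to
`j < 0` by the reflection `x ↦ -x` of the variables, under which the two formulas for `m_{i,j,0}`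
correspond. -/
def stairMonomial (g : ℤ → M) (a : ℤ) (j : ℕ) : M :=
  ∏ l ∈ range j, ∏ r ∈ range (l + 1), g (a + j - 1 - 4 * l + 6 * r)

theorem stairMonomial_peel (g : ℤ → M) (a : ℤ) (j : ℕ) :
    stairMonomial g a (j + 1) =
      (∏ l ∈ range j, ∏ r ∈ range (l + 1), g (a + j - 4 * (l + 1) + 6 * r)) *
        ∏ l ∈ range (j + 1), g (a + j + 2 * l) := by
  unfold stairMonomial
  rw [prod_congr rfl fun l _ => prod_range_succ _ l, prod_mul_distrib,
    prod_range_succ' (fun l => ∏ r ∈ range l, _), prod_range_zero, mul_one]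
  push_cast
  ring_nf

theorem stairMonomial_succ (g : ℤ → M) (a : ℤ) (j : ℕ) :
    stairMonomial g a (j + 1) =
      g (a + j) * stairMonomial g (a - 3) j * ∏ l ∈ range j, g (a + j + 2 + 2 * l) := by
  rw [stairMonomial_peel, prod_range_succ', stairMonomial]
  push_cast
  ring_nf
  ac_rfl

theorem stairMonomial_add_three (g : ℤ → M) (a : ℤ) (j : ℕ) :
    stairMonomial g (a + 3) (j + 1) =
      stairMonomial g a j * ∏ l ∈ range (j + 1), g (a + j + 3 + 2 * l) := by
  rw [stairMonomial_peel, stairMonomial]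
  ring_nf

theorem stairMonomial_octahedron (g : ℤ → M) (a : ℤ) (j : ℕ) :
    stairMonomial g a j * stairMonomial g a (j + 2) =
      g (a + j + 1) * (stairMonomial g (a - 3) (j + 1) * stairMonomial g (a + 3) (j + 1)) := by
  rw [stairMonomial_succ, stairMonomial_add_three]
  push_cast
  ring_nf
  ac_rfl

theorem prod_Icc_prod_Icc_eq_stairMonomial (g : ℤ → M) (a j : ℤ) :
    ∏ l ∈ Icc 0 (j - 1), ∏ r ∈ Icc 0 l, g (a + j - 4 * l + 6 * r - 1) =
      stairMonomial g a j.toNat := by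
  refine prod_nbij' Int.toNat (↑) (fun l hl => ?_) (fun k hk => ?_) (fun l hl => ?_)
    (fun k hk => ?_) fun l hl => prod_nbij' Int.toNat (↑) (fun r hr => ?_) (fun k hk => ?_)
      (fun r hr => ?_) (fun k hk => ?_) fun r hr => congrArg g ?_
  all_goals simp only [mem_Icc, mem_range] at *; omega

theorem prod_Icc_prod_Icc_eq_stairMonomial_neg (g : ℤ → M) (a j : ℤ) :
    ∏ l ∈ Icc j (-2), ∏ r ∈ Icc (l + 1) (-1), g (a + j - 4 * l + 6 * r - 1) =
      stairMonomial (fun x => g (-x)) (1 - a) (-j - 1).toNat := by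
  refine prod_nbij' (fun l => (-l - 2).toNat) (fun k => -k - 2) (fun l hl => ?_) (fun k hk => ?_)
    (fun l hl => ?_) (fun k hk => ?_) fun l hl =>
      prod_nbij' (fun r => (-r - 1).toNat) (fun k => -k - 1) (fun r hr => ?_) (fun k hk => ?_)
        (fun r hr => ?_) (fun k hk => ?_) fun r hr => congrArg g ?_
  all_goals simp only [mem_Icc, mem_range] at *; omega

def monomial (g : ℤ → M) (a j : ℤ) : M :=
  if 0 ≤ j then stairMonomial g a j.toNat
  else stairMonomial (fun x => g (-x)) (1 - a) (-j - 1).toNat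

theorem monomial_natCast (g : ℤ → M) (a : ℤ) (t : ℕ) :
    monomial g a t = stairMonomial g a t := by
  simp [monomial]

theorem monomial_neg (g : ℤ → M) (a : ℤ) (t : ℕ) :
    monomial g a (-(t + 1)) = stairMonomial (fun x => g (-x)) (1 - a) t := by
  rw [monomial, if_neg (by omega)]
  congr
  omega

theorem monomial_octahedron (g : ℤ → M) (a j : ℤ) :
    monomial g a (j - 1) * monomial g a (j + 1) =
      g (a + j) * (monomial g (a - 3) j * monomial g (a + 3) j) := by
  rcases le_or_gt 1 j with hj | hj
  · obtain ⟨t, rfl⟩ : ∃ t : ℕ, j = t + 1 := ⟨(j - 1).toNat, by omega⟩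
    rw [show (t : ℤ) + 1 - 1 = t by ring, show (t : ℤ) + 1 + 1 = (t + 2 : ℕ) by push_cast; ring,
      show (t : ℤ) + 1 = (t + 1 : ℕ) by push_cast; ring]
    simp only [monomial_natCast]
    rw [stairMonomial_octahedron]
    push_cast
    ring_nf
  rcases le_or_gt j (-2) with hj' | hj'
  · obtain ⟨t, rfl⟩ : ∃ t : ℕ, j = -(t + 2) := ⟨(-j - 2).toNat, by omega⟩
    rw [show -((t : ℤ) + 2) - 1 = -((t + 2 : ℕ) + 1) by push_cast; ring,
      show -((t : ℤ) + 2) + 1 = -(t + 1) by ring,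
      show -((t : ℤ) + 2) = -((t + 1 : ℕ) + 1) by push_cast; ring]
    simp only [monomial_neg]
    rw [mul_comm, stairMonomial_octahedron]
    push_cast
    ring_nf
    ac_rfl
  obtain rfl | rfl : j = -1 ∨ j = 0 := by omega
  · simp [monomial, stairMonomial, sub_eq_add_neg]
  · simp [monomial, stairMonomial]

theorem eq_monomial_of_prod_Icc (g : ℤ → M) (b : ℤ → ℤ → M)
    (h₀ : ∀ i, b i (-1) = 1 ∧ b i 0 = 1)
    (hpos : ∀ i j, 1 ≤ j →
      b i j = ∏ l ∈ Icc 0 (j - 1), ∏ r ∈ Icc 0 l, g (3 * i + j - 4 * l + 6 * r - 1))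
    (hneg : ∀ i j, j ≤ -2 →
      b i j = ∏ l ∈ Icc j (-2), ∏ r ∈ Icc (l + 1) (-1), g (3 * i + j - 4 * l + 6 * r - 1))
    (i j : ℤ) : b i j = monomial g (3 * i) j := by
  rcases le_or_gt 1 j with hj | hj
  · rw [hpos i j hj, prod_Icc_prod_Icc_eq_stairMonomial, monomial, if_pos (by omega)]
  rcases le_or_gt j (-2) with hj' | hj'
  · rw [hneg i j hj', prod_Icc_prod_Icc_eq_stairMonomial_neg, monomial, if_neg (by omega)]
  obtain rfl | rfl : j = -1 ∨ j = 0 := by omega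
  · simp [h₀, monomial, stairMonomial]
  · simp [h₀, monomial, stairMonomial]

theorem monomial_ne_zero {K : Type*} [Field K] {g : ℤ → K} (hg : ∀ x, g x ≠ 0) (a j : ℤ) :
    monomial g a j ≠ 0 := by
  unfold monomial stairMonomial
  split_ifs <;> exact prod_ne_zero_iff.2 fun _ _ => prod_ne_zero_iff.2 fun _ _ => hg _

end Monomial

section PosFrac

variable {R K S : Type*} [CommRing R] [Field K] [Algebra R K] [CommRing S] [LinearOrder S]
  (φ : R →+* S)

/-- This set of elements is closed under `+`, `*` and `⁻¹` and avoids `0`, so it contains every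
subtraction-free expression in its members, and such an expression is nonzero. -/
def IsPosFrac (x : K) : Prop :=
  ∃ p q : R, 0 < φ p ∧ 0 < φ q ∧ x = algebraMap R K p / algebraMap R K q

theorem isPosFrac_algebraMap [IsStrictOrderedRing S] {p : R} (hp : 0 < φ p) :
    IsPosFrac φ (algebraMap R K p) :=
  ⟨p, 1, hp, by simp, by simp⟩

theorem algebraMap_ne_zero_of_pos [IsFractionRing R K] {φ : R →+* S} {r : R} (hr : 0 < φ r) :
    algebraMap R K r ≠ 0 :=
  (map_ne_zero_iff _ (IsFractionRing.injective R K)).2 fun h => hr.ne' (by simp [h])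

namespace IsPosFrac

variable {φ} {x y : K}

theorem ne_zero [IsFractionRing R K] (hx : IsPosFrac φ x) : x ≠ 0 := by
  obtain ⟨p, q, hp, hq, rfl⟩ := hx
  exact div_ne_zero (algebraMap_ne_zero_of_pos hp) (algebraMap_ne_zero_of_pos hq)

theorem one [IsStrictOrderedRing S] : IsPosFrac φ (1 : K) :=
  ⟨1, 1, by simp, by simp, by simp⟩

theorem mul [IsStrictOrderedRing S] (hx : IsPosFrac φ x) (hy : IsPosFrac φ y) :
    IsPosFrac φ (x * y) := by
  obtain ⟨p, q, hp, hq, rfl⟩ := hx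
  obtain ⟨p', q', hp', hq', rfl⟩ := hy
  exact ⟨p * p', q * q', by simpa using mul_pos hp hp', by simpa using mul_pos hq hq',
    by rw [map_mul, map_mul, div_mul_div_comm]⟩

theorem inv (hx : IsPosFrac φ x) : IsPosFrac φ x⁻¹ := by
  obtain ⟨p, q, hp, hq, rfl⟩ := hx
  exact ⟨q, p, hq, hp, by rw [inv_div]⟩

theorem div [IsStrictOrderedRing S] (hx : IsPosFrac φ x) (hy : IsPosFrac φ y) :
    IsPosFrac φ (x / y) :=
  div_eq_mul_inv x y ▸ hx.mul hy.inv

theorem add [IsStrictOrderedRing S] [IsFractionRing R K] (hx : IsPosFrac φ x)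
    (hy : IsPosFrac φ y) : IsPosFrac φ (x + y) := by
  obtain ⟨p, q, hp, hq, rfl⟩ := hx
  obtain ⟨p', q', hp', hq', rfl⟩ := hy
  refine ⟨p * q' + p' * q, q * q', ?_, by simpa using mul_pos hq hq', ?_⟩
  · simpa using add_pos (mul_pos hp hq') (mul_pos hp' hq)
  · rw [div_add_div _ _ (algebraMap_ne_zero_of_pos hq) (algebraMap_ne_zero_of_pos hq'), map_add,
      map_mul, map_mul, map_mul]
    ring

theorem prod [IsStrictOrderedRing S] {ι : Type*} (s : Finset ι) {f : ι → K}
    (hf : ∀ i ∈ s, IsPosFrac φ (f i)) : IsPosFrac φ (∏ i ∈ s, f i) :=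
  prod_induction f (IsPosFrac φ) (fun _ _ => mul) one hf

end IsPosFrac

theorem isPosFrac_of_rec [IsStrictOrderedRing S] [IsFractionRing R K] (c F : ℤ → ℤ → K)
    (hc : ∀ j k, 0 ≤ k → IsPosFrac φ (c j k))
    (hF_neg_one : ∀ j, F j (-1) = 1) (hF_zero : ∀ j, F j 0 = 1)
    (hF : ∀ j k, 0 ≤ k → F j (k + 1) =
      (F (j - 3) k * F (j + 3) k + c j k * F (j - 1) k * F (j + 1) k) / F j (k - 1))
    {k : ℤ} (hk : -1 ≤ k) (j : ℤ) : IsPosFrac φ (F j k) := by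
  suffices h : ∀ k, 0 ≤ k → ∀ j, IsPosFrac φ (F j (k - 1)) ∧ IsPosFrac φ (F j k) by
    obtain ⟨k, rfl⟩ : ∃ k', k = k' - 1 := ⟨k + 1, by ring⟩
    exact (h k (by omega) j).1
  intro k hk
  induction k, hk using Int.leInduction with
  | base => simp [hF_neg_one, hF_zero, IsPosFrac.one]
  | succ k hk ih =>
    intro j
    refine ⟨by simpa using (ih j).2, ?_⟩
    rw [hF j k hk]
    exact (((ih _).2.mul (ih _).2).add (((hc j k hk).mul (ih _).2).mul (ih _).2)).div (ih j).1

end PosFrac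

end Octahedron

open Octahedron

theorem stmt8_general (n : ℕ)
    (F : ℤ → ℤ → KK n) (m : ℤ → ℤ → ℤ → KK n) (f : ℤ → ℤ → ℤ → KK n)
    (hF1 : ∀ j : ℤ, F j (-1) = 1)
    (hF2 : ∀ j : ℤ, F j 0 = 1)
    (hF3 : ∀ j k : ℤ, 0 ≤ k →
      F j (k+1) = (F (j-3) k * F (j+3) k +
        (∏ i ∈ Finset.Icc (-k) k, yy n (j+3*i)) * F (j-1) k * F (j+1) k) /
        F j (k-1))
    (hm0 : ∀ i : ℤ, m i (-1) 0 = 1 ∧ m i 0 0 = 1)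
    (hm1 : ∀ i j : ℤ, 1 ≤ j → m i j 0 =
      ∏ l ∈ Finset.Icc 0 (j-1), ∏ mm ∈ Finset.Icc 0 l, yy n (3*i+j-4*l+6*mm-1))
    (hm2 : ∀ i j : ℤ, j ≤ -2 → m i j 0 =
      ∏ l ∈ Finset.Icc j (-2), ∏ mm ∈ Finset.Icc (l+1) (-1), yy n (3*i+j-4*l+6*mm-1))
    (hm3 : ∀ i j : ℤ, m i j (-1) = (m i j 0)⁻¹)
    (hm4 : ∀ i j k : ℤ, 1 ≤ k →
      m i j k = m (i-1) j (k-1) * m (i+1) j (k-1) / m i j (k-2))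
    (hf : ∀ i j k : ℤ, f i j k = m i j k * F (3*i+j) k) :
    ∀ i j k : ℤ, 0 ≤ k →
      f i j (k-1) * f i j (k+1) =
        f (i-1) j k * f (i+1) j k + f i (j-1) k * f i (j+1) k := by
  have hy : ∀ j, IsPosFrac (MvPolynomial.eval fun _ => (1 : ℚ)) (yy n j) := fun j =>
    isPosFrac_algebraMap _ (by simp)
  have hm_zero : ∀ i j, m i j 0 = monomial (yy n) (3 * i) j :=
    eq_monomial_of_prod_Icc (yy n) (fun i j => m i j 0) hm0 hm1 hm2
  have hwave (j : ℤ) : IsMulWave fun i k => m i j k :=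
    ⟨(hm3 · j), fun i => hm_zero i j ▸ monomial_ne_zero (fun x => (hy x).ne_zero) _ _,
      (hm4 · j)⟩
  have hm_base (i j : ℤ) : m i (j - 1) 0 * m i (j + 1) 0 =
      yy n (3 * i + j) * (m (i - 1) j 0 * m (i + 1) j 0) := by
    simpa only [hm_zero, mul_sub, mul_add, mul_one] using monomial_octahedron (yy n) (3 * i) j
  have hF_ne_zero (j k : ℤ) (hk : -1 ≤ k) : F j k ≠ 0 :=
    (isPosFrac_of_rec _ (fun j k => ∏ i ∈ Icc (-k) k, yy n (j + 3 * i)) F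
      (fun _ _ _ => IsPosFrac.prod _ fun _ _ => hy _) hF1 hF2 hF3 hk j).ne_zero
  intro i j k hk
  set c := 3 * i + j
  have hFk : F c (k - 1) * F c (k + 1) = F (c - 3) k * F (c + 3) k +
      (∏ s ∈ Icc (-k) k, yy n (c + 3 * s)) * F (c - 1) k * F (c + 1) k := by
    rw [hF3 c k hk, mul_div_cancel₀ _ (hF_ne_zero _ _ (by omega))]
  have hmk := (hwave j).mul_eq hk i
  have hmj := mul_eq_prod_mul_of_level_zero (yy n) m hwave hm_base hk i j
  simp only [hf, show 3 * (i - 1) + j = c - 3 by ring, show 3 * (i + 1) + j = c + 3 by ring,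
    show 3 * i + (j - 1) = c - 1 by ring, show 3 * i + (j + 1) = c + 1 by ring]
  linear_combination (F c (k - 1) * F c (k + 1)) * hmk + (m (i - 1) j k * m (i + 1) j k) * hFk
    - (F (c - 1) k * F (c + 1) k) * hmj

/-- **Proposition 6.1.**  With `F_{j,k}` defined by the `F`-polynomial recursion
and the Laurent monomials `m_{i,j,k}` defined as in Section 6, the array
`f_{i,j,k} = m_{i,j,k} · F_{3i+j,k}` satisfies the octahedron recurrence
`f_{i,j,k−1} f_{i,j,k+1} = f_{i−1,j,k} f_{i+1,j,k} + f_{i,j−1,k} f_{i,j+1,k}`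
for all `i, j ∈ ℤ` and `k ≥ 0`. -/
theorem stmt8 (n : ℕ) (hn : 2 ≤ n)
    (F : ℤ → ℤ → KK n) (m : ℤ → ℤ → ℤ → KK n) (f : ℤ → ℤ → ℤ → KK n)
    (hF1 : ∀ j : ℤ, F j (-1) = 1)
    (hF2 : ∀ j : ℤ, F j 0 = 1)
    (hF3 : ∀ j k : ℤ, 0 ≤ k →
      F j (k+1) = (F (j-3) k * F (j+3) k +
        (∏ i ∈ Finset.Icc (-k) k, yy n (j+3*i)) * F (j-1) k * F (j+1) k) /
        F j (k-1))
    (hm0 : ∀ i : ℤ, m i (-1) 0 = 1 ∧ m i 0 0 = 1)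
    (hm1 : ∀ i j : ℤ, 1 ≤ j → m i j 0 =
      ∏ l ∈ Finset.Icc 0 (j-1), ∏ mm ∈ Finset.Icc 0 l, yy n (3*i+j-4*l+6*mm-1))
    (hm2 : ∀ i j : ℤ, j ≤ -2 → m i j 0 =
      ∏ l ∈ Finset.Icc j (-2), ∏ mm ∈ Finset.Icc (l+1) (-1), yy n (3*i+j-4*l+6*mm-1))
    (hm3 : ∀ i j : ℤ, m i j (-1) = (m i j 0)⁻¹)
    (hm4 : ∀ i j k : ℤ, 1 ≤ k →
      m i j k = m (i-1) j (k-1) * m (i+1) j (k-1) / m i j (k-2))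
    (hf : ∀ i j k : ℤ, f i j k = m i j k * F (3*i+j) k) :
    ∀ i j k : ℤ, 0 ≤ k →
      f i j (k-1) * f i j (k+1) =
        f (i-1) j k * f (i+1) j k + f i (j-1) k * f i (j+1) k :=
  stmt8_general n F m f hF1 hF2 hF3 hm0 hm1 hm2 hm3 hm4 hf
end
end

section
/- For all i,j ∈ ℤ and all k ≥ 0: m_{i,j−1,k}·m_{i,j+1,k}/(m_{i−1,j,k}·m_{i+1,j,k}) = ∏_{l=−k}^{k} y_{3i+j+3l}; and for k = −1: m_{i,j−1,−1}·m_{i,j+1,−1}/(m_{i−1,j,−1}·m_{i+1,j,−1}) = 1/y_{3i+j}. -/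
open scoped Classical

noncomputable section

/-!
Write `r_k(i,j) = m_{i,j-1,k} m_{i,j+1,k} / (m_{i-1,j,k} m_{i+1,j,k})`. The recurrence for `m`
gives `r_k(i,j) r_{k-2}(i,j) = r_{k-1}(i-1,j) r_{k-1}(i+1,j)`, and `P_k(s) = ∏_{l=-k}^{k} y_{s+3l}`
satisfies `P_k(s) P_{k-2}(s) = P_{k-1}(s-3) P_{k-1}(s+3)` by inclusion–exclusion for the
overlapping windows `[-k, k-2]` and `[-k+2, k]`. So everything reduces to `k = 0`
(`k = -1` is its inverse): `m_{i,j-1,0} m_{i,j+1,0} = y_{3i+j} m_{i-1,j,0} m_{i+1,j,0}`.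

For this, put `s = 3i+j`; for `j ≥ 0`, `m_{i,j,0} = ∏_{l=0}^{j-1} R_l(s)` with rows
`R_l(s) = ∏_{m=0}^{l} y_{s-4l+6m-1}`. Passing from `j` to `j+1` multiplies the two sides by
`R_{j-1}(s-1) R_{j+1}(s+1)` and `R_j(s-3) R_j(s+3)`, which agree since
`R_{j+1}(s+1) = R_j(s-3) y_{s+2j+2}` and `R_j(s+3) = R_{j-1}(s-1) y_{s+2j+2}`.
The case `j < 0` is the same, going downwards.
-/

open Finset

section IntervalProducts

variable {α M : Type*} [LinearOrder α] [One α] [LocallyFiniteOrder α] [CommMonoid M] (f : α → M)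
  {a b : α}

lemma prod_Icc_add_one_right [Add α] [SuccAddOrder α] [NoMaxOrder α] (h : a ≤ b + 1) :
    ∏ x ∈ Icc a (b + 1), f x = (∏ x ∈ Icc a b, f x) * f (b + 1) := by
  rw [← insert_Icc_right_eq_Icc_add_one h, prod_insert (by simp), mul_comm]

lemma prod_Icc_sub_one_left [Sub α] [PredSubOrder α] [NoMinOrder α] (h : a - 1 ≤ b) :
    ∏ x ∈ Icc (a - 1) b, f x = f (a - 1) * ∏ x ∈ Icc a b, f x := by
  rw [← insert_Icc_left_eq_Icc_sub_one h, prod_insert (by simp)]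

end IntervalProducts

section InitialData

variable {M : Type*} [CommMonoid M] (y : ℤ → M)

-- With `s = 3i + j`, `m_{i,j,0}` is `posInit y s j` for `j ≥ -1` and `negInit y s j` for `j ≤ 0`.
def posRow (s l : ℤ) : M := ∏ k ∈ Icc 0 l, y (s - 4 * l + 6 * k - 1)

def posInit (s j : ℤ) : M := ∏ l ∈ Icc 0 (j - 1), posRow y s l

def negRow (s l : ℤ) : M := ∏ k ∈ Icc (l + 1) (-1), y (s - 4 * l + 6 * k - 1)

def negInit (s j : ℤ) : M := ∏ l ∈ Icc j (-2), negRow y s l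

lemma posRow_add_one (t : ℤ) {l : ℤ} (hl : -1 ≤ l) :
    posRow y t (l + 1) = posRow y (t - 4) l * y (t + 2 * l + 1) := by
  rw [posRow, prod_Icc_add_one_right _ (show (0 : ℤ) ≤ l + 1 by omega), posRow]
  congr 1
  · exact prod_congr rfl fun k _ => congr_arg y (by ring)
  · exact congr_arg y (by ring)

lemma negRow_sub_one (t : ℤ) {l : ℤ} (hl : l ≤ -1) :
    negRow y t (l - 1) = y (t + 2 * l + 3) * negRow y (t + 4) l := by
  have h := prod_Icc_sub_one_left (fun k => y (t - 4 * (l - 1) + 6 * k - 1))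
    (show l + 1 - 1 ≤ -1 by omega)
  rw [add_sub_cancel_right] at h
  rw [negRow, sub_add_cancel, h, negRow]
  congr 1
  · exact congr_arg y (by ring)
  · exact prod_congr rfl fun k _ => congr_arg y (by ring)

lemma posRow_balance (s : ℤ) {j : ℤ} (hj : 0 ≤ j) :
    posRow y (s - 1) (j - 1) * posRow y (s + 1) (j + 1) =
      posRow y (s - 3) j * posRow y (s + 3) j := by
  have h := posRow_add_one y (s + 3) (show -1 ≤ j - 1 by omega)
  rw [sub_add_cancel] at h
  rw [posRow_add_one y (s + 1) (by omega), h, show s + 1 - 4 = s - 3 by ring,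
    show s + 3 - 4 = s - 1 by ring, show s + 3 + 2 * (j - 1) + 1 = s + 1 + 2 * j + 1 by ring]
  ac_rfl

lemma negRow_balance (s : ℤ) {j : ℤ} (hj : j ≤ -1) :
    negRow y (s - 1) (j - 2) * negRow y (s + 1) j =
      negRow y (s - 3) (j - 1) * negRow y (s + 3) (j - 1) := by
  have h := negRow_sub_one y (s - 1) (show j - 1 ≤ -1 by omega)
  rw [show j - 1 - 1 = j - 2 by ring] at h
  rw [h, negRow_sub_one y (s - 3) (by omega), show s - 1 + 4 = s + 3 by ring,
    show s - 3 + 4 = s + 1 by ring, show s - 1 + 2 * (j - 1) + 3 = s - 3 + 2 * j + 3 by ring]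
  ac_rfl

lemma posInit_add_one (s : ℤ) {j : ℤ} (hj : -1 ≤ j) :
    posInit y s (j + 1) = posInit y s j * posRow y s j := by
  obtain rfl | hj := hj.eq_or_lt
  · simp [posInit, posRow]
  · have h := prod_Icc_add_one_right (posRow y s) (show (0 : ℤ) ≤ j - 1 + 1 by omega)
    rw [sub_add_cancel] at h
    rw [posInit, posInit, add_sub_cancel_right, h]

lemma negInit_eq_negRow_mul (s : ℤ) {j : ℤ} (hj : j ≤ -1) :
    negInit y s j = negRow y s j * negInit y s (j + 1) := by
  obtain rfl | hj := hj.eq_or_lt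
  · simp [negInit, negRow]
  · rw [negInit, negInit, ← insert_Icc_add_one_left_eq_Icc (show j ≤ -2 by omega),
      prod_insert (by simp)]

lemma posInit_balance (s : ℤ) {j : ℤ} (hj : 0 ≤ j) :
    posInit y (s - 1) (j - 1) * posInit y (s + 1) (j + 1) =
      y s * (posInit y (s - 3) j * posInit y (s + 3) j) := by
  induction j, hj using Int.leInduction with
  | base => simp [posInit, posRow]
  | succ j hj ih =>
    have h := posInit_add_one y (s - 1) (show -1 ≤ j - 1 by omega)
    rw [sub_add_cancel] at h
    rw [add_sub_cancel_right, h, posInit_add_one y (s + 1) (by omega),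
      posInit_add_one y (s - 3) (by omega), posInit_add_one y (s + 3) (by omega),
      mul_mul_mul_comm, ih, posRow_balance y s hj]
    ac_rfl

lemma negInit_balance (s : ℤ) {j : ℤ} (hj : j ≤ -1) :
    negInit y (s - 1) (j - 1) * negInit y (s + 1) (j + 1) =
      y s * (negInit y (s - 3) j * negInit y (s + 3) j) := by
  induction j, hj using Int.leInductionDown with
  | base =>
    simp [negInit, negRow]
    ring_nf
  | pred j hj ih =>
    rw [negInit_eq_negRow_mul y (s - 1) (show j - 1 - 1 ≤ -1 by omega), sub_add_cancel,
      sub_add_cancel, negInit_eq_negRow_mul y (s - 3) (show j - 1 ≤ -1 by omega),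
      negInit_eq_negRow_mul y (s + 3) (show j - 1 ≤ -1 by omega), sub_add_cancel,
      negInit_eq_negRow_mul y (s + 1) hj, show j - 1 - 1 = j - 2 by ring,
      mul_mul_mul_comm, ih, negRow_balance y s hj]
    ac_rfl

end InitialData

section InitialValues

variable {M : Type*} [CommMonoid M] {y : ℤ → M} {m : ℤ → ℤ → ℤ → M}

lemma initial_eq_posInit (hm0 : ∀ i, m i (-1) 0 = 1 ∧ m i 0 0 = 1)
    (hm1 : ∀ i j, 1 ≤ j → m i j 0 = posInit y (3 * i + j) j) {i j : ℤ} (hj : -1 ≤ j) :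
    m i j 0 = posInit y (3 * i + j) j := by
  obtain rfl | rfl | hj : j = -1 ∨ j = 0 ∨ 1 ≤ j := by omega
  · simp [hm0, posInit]
  · simp [hm0, posInit]
  · exact hm1 i j hj

lemma initial_eq_negInit (hm0 : ∀ i, m i (-1) 0 = 1 ∧ m i 0 0 = 1)
    (hm2 : ∀ i j, j ≤ -2 → m i j 0 = negInit y (3 * i + j) j) {i j : ℤ} (hj : j ≤ 0) :
    m i j 0 = negInit y (3 * i + j) j := by
  obtain rfl | rfl | hj : j = -1 ∨ j = 0 ∨ j ≤ -2 := by omega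
  · simp [hm0, negInit]
  · simp [hm0, negInit]
  · exact hm2 i j hj

lemma initial_balance (hm0 : ∀ i, m i (-1) 0 = 1 ∧ m i 0 0 = 1)
    (hm1 : ∀ i j, 1 ≤ j → m i j 0 = posInit y (3 * i + j) j)
    (hm2 : ∀ i j, j ≤ -2 → m i j 0 = negInit y (3 * i + j) j) (i j : ℤ) :
    m i (j - 1) 0 * m i (j + 1) 0 = y (3 * i + j) * (m (i - 1) j 0 * m (i + 1) j 0) := by
  obtain ⟨e₁, e₂, e₃, e₄⟩ : 3 * i + (j - 1) = 3 * i + j - 1 ∧ 3 * i + (j + 1) = 3 * i + j + 1 ∧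
      3 * (i - 1) + j = 3 * i + j - 3 ∧ 3 * (i + 1) + j = 3 * i + j + 3 := by omega
  rcases le_or_gt 0 j with hj | hj
  · rw [initial_eq_posInit hm0 hm1 (show -1 ≤ j - 1 by omega),
      initial_eq_posInit hm0 hm1 (show -1 ≤ j + 1 by omega),
      initial_eq_posInit hm0 hm1 (show -1 ≤ j by omega),
      initial_eq_posInit hm0 hm1 (show -1 ≤ j by omega), e₁, e₂, e₃, e₄]
    exact posInit_balance y _ hj
  · rw [initial_eq_negInit hm0 hm2 (show j - 1 ≤ 0 by omega),
      initial_eq_negInit hm0 hm2 (show j + 1 ≤ 0 by omega),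
      initial_eq_negInit hm0 hm2 (show j ≤ 0 by omega),
      initial_eq_negInit hm0 hm2 (show j ≤ 0 by omega), e₁, e₂, e₃, e₄]
    exact negInit_balance y _ (by omega)

end InitialValues

section SymmProd

variable {M : Type*} [CommMonoid M] (y : ℤ → M)

def symmProd (k s : ℤ) : M := ∏ l ∈ Icc (-k) k, y (s + 3 * l)

lemma symmProd_balance (s : ℤ) {k : ℤ} (hk : 0 ≤ k) :
    symmProd y (k + 1) (s - 3) * symmProd y (k + 1) (s + 3) =
      symmProd y (k + 2) s * symmProd y k s := by
  have shift (c : ℤ) : symmProd y (k + 1) (s + 3 * c) =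
      ∏ l ∈ Icc (-(k + 1) + c) (k + 1 + c), y (s + 3 * l) := by
    rw [symmProd, ← map_add_right_Icc, prod_map]
    exact prod_congr rfl fun l _ => congr_arg y (by simp; ring)
  have hl := shift (-1)
  rw [show s + 3 * -1 = s - 3 by ring] at hl
  have hr := shift 1
  rw [mul_one] at hr
  rw [hl, hr, ← prod_union_inter]
  congr 2 <;> ext l <;> simp only [mem_union, mem_inter, mem_Icc] <;> omega

end SymmProd

section Ratio

variable {K : Type*} [Field K] {y : ℤ → K} {m : ℤ → ℤ → ℤ → K}

def mRatio (m : ℤ → ℤ → ℤ → K) (i j k : ℤ) : K :=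
  m i (j - 1) k * m i (j + 1) k / (m (i - 1) j k * m (i + 1) j k)

lemma initial_ne_zero (hy : ∀ l, y l ≠ 0) (hm0 : ∀ i, m i (-1) 0 = 1 ∧ m i 0 0 = 1)
    (hm1 : ∀ i j, 1 ≤ j → m i j 0 = posInit y (3 * i + j) j)
    (hm2 : ∀ i j, j ≤ -2 → m i j 0 = negInit y (3 * i + j) j) (i j : ℤ) : m i j 0 ≠ 0 := by
  rcases le_or_gt 0 j with hj | hj
  · rw [initial_eq_posInit hm0 hm1 (show -1 ≤ j by omega)]
    exact prod_ne_zero_iff.2 fun _ _ => prod_ne_zero_iff.2 fun _ _ => hy _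
  · rw [initial_eq_negInit hm0 hm2 (show j ≤ 0 by omega)]
    exact prod_ne_zero_iff.2 fun _ _ => prod_ne_zero_iff.2 fun _ _ => hy _

lemma mRatio_zero (hy : ∀ l, y l ≠ 0) (hm0 : ∀ i, m i (-1) 0 = 1 ∧ m i 0 0 = 1)
    (hm1 : ∀ i j, 1 ≤ j → m i j 0 = posInit y (3 * i + j) j)
    (hm2 : ∀ i j, j ≤ -2 → m i j 0 = negInit y (3 * i + j) j) (i j : ℤ) :
    mRatio m i j 0 = y (3 * i + j) := by
  rw [mRatio, div_eq_iff (mul_ne_zero (initial_ne_zero hy hm0 hm1 hm2 _ _)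
    (initial_ne_zero hy hm0 hm1 hm2 _ _)), initial_balance hm0 hm1 hm2]

lemma mRatio_neg_one (hm3 : ∀ i j, m i j (-1) = (m i j 0)⁻¹) (i j : ℤ) :
    mRatio m i j (-1) = (mRatio m i j 0)⁻¹ := by
  simp only [mRatio, hm3, div_eq_mul_inv, mul_inv, inv_inv]

-- No nonvanishing is needed: both sides are the same Laurent monomial in values of `m`,
-- and `x ↦ x⁻¹` is multiplicative on all of `K`, including at `0`.
lemma mRatio_rec
    (hm4 : ∀ i j k, 1 ≤ k → m i j k = m (i - 1) j (k - 1) * m (i + 1) j (k - 1) / m i j (k - 2))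
    {k : ℤ} (hk : 1 ≤ k) (i j : ℤ) :
    mRatio m i j k =
      mRatio m (i - 1) j (k - 1) * mRatio m (i + 1) j (k - 1) / mRatio m i j (k - 2) := by
  simp only [mRatio, hm4 _ _ k hk, div_eq_mul_inv, mul_inv, inv_inv]
  ring

theorem mRatio_eq_symmProd (hy : ∀ l, y l ≠ 0) (h₀ : ∀ i j, mRatio m i j 0 = y (3 * i + j))
    (hneg : ∀ i j, mRatio m i j (-1) = (y (3 * i + j))⁻¹)
    (hm4 : ∀ i j k, 1 ≤ k → m i j k = m (i - 1) j (k - 1) * m (i + 1) j (k - 1) / m i j (k - 2))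
    {k : ℤ} (hk : 0 ≤ k) (i j : ℤ) : mRatio m i j k = symmProd y k (3 * i + j) := by
  suffices ∀ i j, mRatio m i j k = symmProd y k (3 * i + j) ∧
      mRatio m i j (k + 1) = symmProd y (k + 1) (3 * i + j) from (this i j).1
  induction k, hk using Int.leInduction with
  | base =>
    refine fun i j => ⟨by simp [symmProd, h₀], ?_⟩
    rw [zero_add, mRatio_rec hm4 le_rfl, sub_self, show (1 : ℤ) - 2 = -1 by norm_num, h₀, h₀, hneg,
      symmProd, show Icc (-1 : ℤ) 1 = {-1, 0, 1} by rfl, prod_insert (by decide),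
      prod_pair (by decide), div_inv_eq_mul]
    ring_nf
  | succ k hk ih =>
    refine fun i j => ⟨(ih i j).2, ?_⟩
    rw [mRatio_rec hm4 (by omega), add_sub_cancel_right, show k + 1 + 1 - 2 = k by ring,
      (ih _ _).2, (ih _ _).2, (ih _ _).1, show 3 * (i - 1) + j = 3 * i + j - 3 by ring,
      show 3 * (i + 1) + j = 3 * i + j + 3 by ring, symmProd_balance y _ hk,
      mul_div_cancel_right₀ _ (show symmProd y k (3 * i + j) ≠ 0 from
        prod_ne_zero_iff.2 fun _ _ => hy _), show k + 1 + 1 = k + 2 by ring]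

end Ratio

lemma yy_ne_zero (n : ℕ) (j : ℤ) : yy n j ≠ 0 := by
  simp [yy, MvPolynomial.X_ne_zero]

theorem stmt9_general (n : ℕ)
    (m : ℤ → ℤ → ℤ → KK n)
    (hm0 : ∀ i : ℤ, m i (-1) 0 = 1 ∧ m i 0 0 = 1)
    (hm1 : ∀ i j : ℤ, 1 ≤ j → m i j 0 =
      ∏ l ∈ Finset.Icc 0 (j-1), ∏ mm ∈ Finset.Icc 0 l, yy n (3*i+j-4*l+6*mm-1))
    (hm2 : ∀ i j : ℤ, j ≤ -2 → m i j 0 =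
      ∏ l ∈ Finset.Icc j (-2), ∏ mm ∈ Finset.Icc (l+1) (-1), yy n (3*i+j-4*l+6*mm-1))
    (hm3 : ∀ i j : ℤ, m i j (-1) = (m i j 0)⁻¹)
    (hm4 : ∀ i j k : ℤ, 1 ≤ k →
      m i j k = m (i-1) j (k-1) * m (i+1) j (k-1) / m i j (k-2)) :
    (∀ i j k : ℤ, 0 ≤ k →
      m i (j-1) k * m i (j+1) k / (m (i-1) j k * m (i+1) j k) =
        ∏ l ∈ Finset.Icc (-k) k, yy n (3*i+j+3*l)) ∧
    (∀ i j : ℤ,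
      m i (j-1) (-1) * m i (j+1) (-1) / (m (i-1) j (-1) * m (i+1) j (-1)) =
        (yy n (3*i+j))⁻¹) := by
  have hy := yy_ne_zero n
  have h₀ : ∀ i j, mRatio m i j 0 = yy n (3 * i + j) := mRatio_zero hy hm0 hm1 hm2
  have hneg : ∀ i j, mRatio m i j (-1) = (yy n (3 * i + j))⁻¹ := fun i j => by
    rw [mRatio_neg_one hm3, h₀]
  exact ⟨fun i j k hk => mRatio_eq_symmProd hy h₀ hneg hm4 hk i j, hneg⟩

/-- **Lemma 6.2.**  For the Laurent monomials `m_{i,j,k}` of Section 6,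
`m_{i,j−1,k} m_{i,j+1,k} / (m_{i−1,j,k} m_{i+1,j,k}) = ∏_{l=−k}^{k} y_{3i+j+3l}`
for all `k ≥ 0`, and
`m_{i,j−1,−1} m_{i,j+1,−1} / (m_{i−1,j,−1} m_{i+1,j,−1}) = y_{3i+j}⁻¹`. -/
theorem stmt9 (n : ℕ) (hn : 2 ≤ n)
    (m : ℤ → ℤ → ℤ → KK n)
    (hm0 : ∀ i : ℤ, m i (-1) 0 = 1 ∧ m i 0 0 = 1)
    (hm1 : ∀ i j : ℤ, 1 ≤ j → m i j 0 =
      ∏ l ∈ Finset.Icc 0 (j-1), ∏ mm ∈ Finset.Icc 0 l, yy n (3*i+j-4*l+6*mm-1))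
    (hm2 : ∀ i j : ℤ, j ≤ -2 → m i j 0 =
      ∏ l ∈ Finset.Icc j (-2), ∏ mm ∈ Finset.Icc (l+1) (-1), yy n (3*i+j-4*l+6*mm-1))
    (hm3 : ∀ i j : ℤ, m i j (-1) = (m i j 0)⁻¹)
    (hm4 : ∀ i j k : ℤ, 1 ≤ k →
      m i j k = m (i-1) j (k-1) * m (i+1) j (k-1) / m i j (k-2)) :
    (∀ i j k : ℤ, 0 ≤ k →
      m i (j-1) k * m i (j+1) k / (m (i-1) j k * m (i+1) j k) =
        ∏ l ∈ Finset.Icc (-k) k, yy n (3*i+j+3*l)) ∧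
    (∀ i j : ℤ,
      m i (j-1) (-1) * m i (j+1) (-1) / (m (i-1) j (-1) * m (i+1) j (-1)) =
        (yy n (3*i+j))⁻¹) :=
  stmt9_general n m hm0 hm1 hm2 hm3 hm4
end
end
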